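/- arXiv:1609.09480 — 7 statements merged into one kernel-verified Lean document; each statement's English description precedes it below -/
import Mathlib

section
/- Let (X,d) be a δ-hyperbolic metric space (δ ≥ 0), let α, β ≥ 0 be real numbers, and let a, x, y, z be four points of X. If y belongs to α-geod(a,x), z belongs to β-geod(a,y), and d(y,z) ≥ (α + β)/2, then z belongs to (β + δ)-geod(a,x). -/
/-!
Apply the four-point condition to `x, y, a, z`. If the maximum is attained by
`d(x,a) + d(y,z)`, the bound follows from `z ∈ β-geod(a,y)` alone. Otherwise
`d(x,z) ≤ d(x,y) + d(a,z) - d(a,y) + δ`, and estimating `d(x,y)` by `y ∈ α-geod(a,x)` and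
`d(a,z)` by `z ∈ β-geod(a,y)` leaves an excess `α + β - 2 d(y,z)`, which is nonpositive.
-/

theorem mem_approx_geod_trans_general
    {X : Type*} [MetricSpace X] (δ : ℝ)
    (hhyp : ∀ x₁ x₂ x₃ x₄ : X, dist x₁ x₄ + dist x₂ x₃ ≤
      max (dist x₁ x₂ + dist x₃ x₄) (dist x₁ x₃ + dist x₂ x₄) + δ)
    (α β : ℝ) (a x y z : X)
    (hy : dist a y + dist y x ≤ dist a x + α)
    (hz : dist a z + dist z y ≤ dist a y + β)
    (hyz : (α + β) / 2 ≤ dist y z) :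
    dist a z + dist z x ≤ dist a x + (β + δ) := by
  have four_point := hhyp x y a z
  rw [← max_add_add_right, le_max_iff, dist_comm x z, dist_comm y a, dist_comm x a] at four_point
  rw [dist_comm y x] at hy
  rw [dist_comm z y] at hz
  rcases four_point with hxy | hxa
  · calc dist a z + dist z x
        ≤ 2 * dist a z + dist x y - dist a y + δ := by linarith
      _ ≤ dist a x + α + 2 * β - 2 * dist y z + δ := by linarith
      _ ≤ dist a x + (β + δ) := by linarith
  · calc dist a z + dist z x
        ≤ dist a z + dist y z - dist a y + dist a x + δ := by linarith
      _ ≤ dist a x + (β + δ) := by linarith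

/-- Lemma 3.4 of Alvarez–Lafforgue: in a δ-hyperbolic space, if `y ∈ α-geod(a,x)`,
`z ∈ β-geod(a,y)` and `d(y,z) ≥ (α+β)/2`, then `z ∈ (β+δ)-geod(a,x)`. -/
theorem mem_approx_geod_trans
    {X : Type*} [MetricSpace X] (δ : ℝ) (hδ : 0 ≤ δ)
    (hhyp : ∀ x₁ x₂ x₃ x₄ : X, dist x₁ x₄ + dist x₂ x₃ ≤
      max (dist x₁ x₂ + dist x₃ x₄) (dist x₁ x₃ + dist x₂ x₄) + δ)
    (α β : ℝ) (hα : 0 ≤ α) (hβ : 0 ≤ β) (a x y z : X)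
    (hy : dist a y + dist y x ≤ dist a x + α)
    (hz : dist a z + dist z y ≤ dist a y + β)
    (hyz : (α + β) / 2 ≤ dist y z) :
    dist a z + dist z x ≤ dist a x + (β + δ) :=
  mem_approx_geod_trans_general δ hhyp α β a x y z hy hz hyz
end

section
/- Let (X,d) be a nonempty good discrete hyperbolic space, δ-hyperbolic for an integer δ ≥ 1, equipped with an isometric action of a group G that is metrically proper. Then there exists a real p₀ ≥ 1 such that for every real p ≥ p₀ there exists a map b : G → ℓ^p(X^{≤4δ}) which is a cocycle for the permutation representation π (i.e., b(gh) = b(g) + π(g)(b(h)) for all g,h ∈ G) and which is proper (for every M ≥ 0 the set {g ∈ G : ‖b(g)‖_p ≤ M} is finite). -/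
/-!
For `a ∈ X` and a point `x`, run a random walk from `x` towards `a`: from a point at distance
`L ≥ 5δ` from `a` it jumps uniformly to the points of a prescribed lower level lying near a
geodesic to `a`, and it arrives on the sphere of radius `3δ` about `a` with a probability measure
`F_a(x)`. Once the walks from `x` and `y` are deeper than the Gromov product `(x|y)_a` they
fellow-travel within `4δ`, so their transition measures overlap in mass `≥ 1/N` and each step
contracts their total variation by `θ = 1 - 1/N` (Dobrushin). Thus `F_a(x) - F_a(y)` decays
exponentially in `(x|y)_a`; balls grow at most exponentially, so for `p` large the pairs `(a, w)`
with `d(a, w) ≤ 4δ` carry an `ℓ^p` vector `F(x) - F(y)`. By equivariance `b(g) = F(g o) - F(o)`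
is a cocycle, and it is proper: for each `a` on a geodesic from `g o` to `o`, away from its ends,
`F_a(g o)` has an atom of mass `≥ 1/N` that `F_a(o)` does not charge, so
`‖b g‖_p ^ p ≥ (d(o, g o) - 10δ) / N ^ p`.
-/

open Finset

noncomputable section

namespace Finsupp

variable {X : Type*}

def mass : (X →₀ ℝ) →ₗ[ℝ] ℝ := lsum ℝ fun _ => LinearMap.id

def l1Norm (μ : X →₀ ℝ) : ℝ := mass |μ|

lemma mass_eq_sum {μ : X →₀ ℝ} {s : Finset X} (h : μ.support ⊆ s) :
    mass μ = ∑ b ∈ s, μ b :=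
  sum_of_support_subset μ h _ (by simp)

@[simp] lemma mass_single (x : X) (c : ℝ) : mass (single x c) = c := by
  simp [mass]

lemma mass_nonneg {μ : X →₀ ℝ} (h : 0 ≤ μ) : 0 ≤ mass μ := by
  rw [mass_eq_sum subset_rfl]
  exact Finset.sum_nonneg fun b _ => (h b : (0 : ℝ) ≤ μ b)

lemma mass_mono {μ ν : X →₀ ℝ} (h : μ ≤ ν) : mass μ ≤ mass ν := by
  simpa using mass_nonneg (sub_nonneg.2 h)

lemma apply_le_mass {μ : X →₀ ℝ} (h : 0 ≤ μ) (b : X) : μ b ≤ mass μ := by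
  classical
  rw [mass_eq_sum (subset_union_left (s₂ := {b}))]
  exact Finset.single_le_sum (f := fun c => μ c) (fun c _ => (h c : (0 : ℝ) ≤ μ c)) (by simp)

lemma eq_zero_of_mass_eq_zero {μ : X →₀ ℝ} (h : 0 ≤ μ) (hm : mass μ = 0) : μ = 0 := by
  ext b
  show μ b = 0
  exact le_antisymm (hm ▸ apply_le_mass h b) (h b)

lemma support_subset_of_le {μ ν : X →₀ ℝ} (h₀ : 0 ≤ μ) (h : μ ≤ ν) :
    μ.support ⊆ ν.support := by
  intro b hb
  rw [mem_support_iff] at hb ⊢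
  exact ((lt_of_le_of_ne (h₀ b) (Ne.symm hb)).trans_le (h b)).ne'

lemma l1Norm_of_nonneg {μ : X →₀ ℝ} (h : 0 ≤ μ) : l1Norm μ = mass μ := by
  rw [l1Norm, abs_of_nonneg h]

lemma abs_apply_le_l1Norm (μ : X →₀ ℝ) (b : X) : |μ b| ≤ l1Norm μ :=
  apply_le_mass (abs_nonneg μ) b

lemma l1Norm_add_le (μ ν : X →₀ ℝ) : l1Norm (μ + ν) ≤ l1Norm μ + l1Norm ν := by
  rw [l1Norm, l1Norm, l1Norm, ← map_add]
  exact mass_mono (abs_add_le μ ν)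

lemma l1Norm_sub_le (μ ν : X →₀ ℝ) : l1Norm (μ - ν) ≤ l1Norm μ + l1Norm ν := by
  simpa [sub_eq_add_neg, l1Norm] using l1Norm_add_le μ (-ν)

lemma l1Norm_sum_le {ι : Type*} (s : Finset ι) (f : ι → X →₀ ℝ) :
    l1Norm (∑ i ∈ s, f i) ≤ ∑ i ∈ s, l1Norm (f i) :=
  le_sum_of_subadditive l1Norm (by simp [l1Norm]) l1Norm_add_le s f

lemma l1Norm_smul_of_nonneg {c : ℝ} (hc : 0 ≤ c) (μ : X →₀ ℝ) :
    l1Norm (c • μ) = c * l1Norm μ := by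
  have : |c • μ| = c • |μ| := by
    ext b
    change |c * μ b| = c * |μ b|
    rw [abs_mul, abs_of_nonneg hc]
  rw [l1Norm, l1Norm, this, map_smul, smul_eq_mul]

lemma l1Norm_sub_le_two {μ ν : X →₀ ℝ} (hμ : 0 ≤ μ) (hν : 0 ≤ ν) (hμ₁ : mass μ = 1)
    (hν₁ : mass ν = 1) : l1Norm (μ - ν) ≤ 2 := by
  have := l1Norm_sub_le μ ν
  rw [l1Norm_of_nonneg hμ, l1Norm_of_nonneg hν, hμ₁, hν₁] at this
  linarith

lemma l1Norm_sub_le_of_le_apply {μ ν : X →₀ ℝ} (hμ : 0 ≤ μ) (hν : 0 ≤ ν) (hμ₁ : mass μ = 1)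
    (hν₁ : mass ν = 1) {β : ℝ} {w : X} (hμw : β ≤ μ w) (hνw : β ≤ ν w) :
    l1Norm (μ - ν) ≤ 2 - 2 * β := by
  have habs : |μ - ν| = μ + ν - 2 • (μ ⊓ ν) := by
    ext b
    change |μ b - ν b| = μ b + ν b - 2 • min (μ b) (ν b)
    rcases le_total (μ b) (ν b) with h | h
    · rw [abs_of_nonpos (by linarith), min_eq_left h, two_nsmul]; ring
    · rw [abs_of_nonneg (by linarith), min_eq_right h, two_nsmul]; ring
  have hinf : β ≤ mass (μ ⊓ ν) := (le_inf hμw hνw).trans (apply_le_mass (le_inf hμ hν) w)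
  rw [l1Norm, habs, map_sub, map_add, map_nsmul, hμ₁, hν₁]
  simp only [nsmul_eq_mul, Nat.cast_ofNat]
  linarith

lemma linearCombination_eq_sum (P : X → X →₀ ℝ) (μ : X →₀ ℝ) :
    linearCombination ℝ P μ = ∑ z ∈ μ.support, μ z • P z := rfl

lemma mass_linearCombination {P : X → X →₀ ℝ} (hP : ∀ z, mass (P z) = 1) (μ : X →₀ ℝ) :
    mass (linearCombination ℝ P μ) = mass μ := by
  rw [linearCombination_eq_sum, map_sum, mass_eq_sum subset_rfl]
  simp [hP]

lemma linearCombination_nonneg {P : X → X →₀ ℝ} (hP : ∀ z, 0 ≤ P z) {μ : X →₀ ℝ}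
    (hμ : 0 ≤ μ) : 0 ≤ linearCombination ℝ P μ :=
  Finset.sum_nonneg fun z _ => smul_nonneg (hμ z) (hP z)

lemma exists_mem_support_of_mem_support_linearCombination {P : X → X →₀ ℝ} {μ : X →₀ ℝ}
    {b : X} (hb : b ∈ (linearCombination ℝ P μ).support) :
    ∃ z ∈ μ.support, b ∈ (P z).support := by
  classical
  obtain ⟨z, hz, hbz⟩ := mem_biUnion.1 (support_sum hb)
  exact ⟨z, hz, support_smul hbz⟩

lemma mass_smul_linearCombination_sub (P : X → X →₀ ℝ) (μ ν : X →₀ ℝ) :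
    mass ν • linearCombination ℝ P μ - mass μ • linearCombination ℝ P ν =
      ∑ z ∈ μ.support, ∑ z' ∈ ν.support, (μ z * ν z') • (P z - P z') := by
  simp only [mass_eq_sum subset_rfl, linearCombination_eq_sum, Finset.smul_sum, smul_smul,
    Finset.sum_mul, Finset.sum_smul, smul_sub, Finset.sum_sub_distrib]
  rw [Finset.sum_comm (s := ν.support)]
  simp only [mul_comm]

lemma mass_mul_l1Norm_linearCombination_sub_le (P : X → X →₀ ℝ) {μ ν : X →₀ ℝ} (hμ : 0 ≤ μ)
    (hν : 0 ≤ ν) (hm : mass μ = mass ν) {c : ℝ}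
    (hP : ∀ z ∈ μ.support, ∀ z' ∈ ν.support, l1Norm (P z - P z') ≤ 2 * c) :
    mass μ * l1Norm (linearCombination ℝ P μ - linearCombination ℝ P ν) ≤
      mass μ * (2 * c * mass μ) := by
  rw [← l1Norm_smul_of_nonneg (mass_nonneg hμ), smul_sub]
  nth_rw 1 [hm]
  rw [mass_smul_linearCombination_sub]
  calc _ ≤ ∑ z ∈ μ.support, ∑ z' ∈ ν.support, l1Norm ((μ z * ν z') • (P z - P z')) :=
        (l1Norm_sum_le _ _).trans (Finset.sum_le_sum fun _ _ => l1Norm_sum_le _ _)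
    _ ≤ ∑ z ∈ μ.support, ∑ z' ∈ ν.support, μ z * ν z' * (2 * c) := by
        gcongr with z hz z' hz'
        rw [l1Norm_smul_of_nonneg (mul_nonneg (hμ z) (hν z'))]
        exact mul_le_mul_of_nonneg_left (hP z hz z' hz') (mul_nonneg (hμ z) (hν z'))
    _ = mass μ * (2 * c * mass μ) := by
        rw [← Finset.sum_congr rfl fun _ _ => Finset.sum_mul .., ← Finset.sum_mul,
          ← Finset.sum_mul_sum, ← mass_eq_sum subset_rfl, ← mass_eq_sum subset_rfl, ← hm]
        ring

/-- Dobrushin's contraction: write `μ - ν = σ⁺ - σ⁻` and couple `σ⁺` with `σ⁻`. -/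
lemma l1Norm_linearCombination_sub_le (P : X → X →₀ ℝ) {μ ν : X →₀ ℝ} (hμ : 0 ≤ μ)
    (hν : 0 ≤ ν) (hm : mass μ = mass ν) {c : ℝ}
    (hP : ∀ z ∈ μ.support, ∀ z' ∈ ν.support, l1Norm (P z - P z') ≤ 2 * c) :
    l1Norm (linearCombination ℝ P μ - linearCombination ℝ P ν) ≤ c * l1Norm (μ - ν) := by
  set σ := μ - ν
  have hLσ : linearCombination ℝ P μ - linearCombination ℝ P ν =
      linearCombination ℝ P σ⁺ - linearCombination ℝ P σ⁻ := by
    rw [← map_sub, ← map_sub, posPart_sub_negPart]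
  have hσμ : σ⁺ ≤ μ := sup_le (sub_le_self _ hν) hμ
  have hσν : σ⁻ ≤ ν := sup_le (by rw [neg_sub]; exact sub_le_self _ hμ) hν
  have hm' : mass σ⁺ = mass σ⁻ := by
    have := congrArg mass (posPart_sub_negPart σ)
    rw [map_sub, map_sub, hm, sub_self] at this
    linarith
  have hl1 : l1Norm σ = 2 * mass σ⁺ := by
    rw [l1Norm, ← posPart_add_negPart, map_add, ← hm']
    ring
  rw [hLσ, hl1]
  rcases (mass_nonneg (posPart_nonneg σ)).eq_or_lt with hm0 | hm0
  · rw [eq_zero_of_mass_eq_zero (posPart_nonneg σ) hm0.symm,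
      eq_zero_of_mass_eq_zero (negPart_nonneg σ) (hm' ▸ hm0.symm)]
    simp [l1Norm]
  have := le_of_mul_le_mul_left (mass_mul_l1Norm_linearCombination_sub_le P (posPart_nonneg σ)
    (negPart_nonneg σ) hm' fun z hz z' hz' =>
      hP z (support_subset_of_le (posPart_nonneg σ) hσμ hz)
        z' (support_subset_of_le (negPart_nonneg σ) hσν hz')) hm0
  linarith

def unif (s : Finset X) : X →₀ ℝ := (#s : ℝ)⁻¹ • ∑ w ∈ s, single w 1

lemma unif_apply [DecidableEq X] (s : Finset X) (b : X) :
    unif s b = if b ∈ s then (#s : ℝ)⁻¹ else 0 := by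
  simp [unif, single_apply]

lemma unif_nonneg (s : Finset X) : 0 ≤ unif s := by
  classical
  intro b
  rw [unif_apply]
  split <;> positivity

lemma support_unif_subset (s : Finset X) : (unif s).support ⊆ s := by
  classical
  intro b hb
  by_contra h
  simp [unif_apply, h] at hb

lemma mass_unif {s : Finset X} (h : s.Nonempty) : mass (unif s) = 1 := by
  simp [unif, h.ne_empty]

lemma inv_le_unif_apply {s : Finset X} {b : X} (hb : b ∈ s) {n : ℕ} (hn : #s ≤ n) :
    (n : ℝ)⁻¹ ≤ unif s b := by
  classical
  rw [unif_apply, if_pos hb]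
  exact inv_anti₀ (by exact_mod_cast card_pos.2 ⟨b, hb⟩) (by exact_mod_cast hn)

lemma mapDomain_unif {Y : Type*} (f : X ↪ Y) (s : Finset X) :
    mapDomain f (unif s) = unif (s.map f) := by
  rw [unif, unif, mapDomain_smul, mapDomain_finsetSum, card_map, sum_map]
  simp only [mapDomain_single]

end Finsupp

lemma Finset.sum_comp_le {ι κ : Type*} [DecidableEq κ] (s : Finset ι) (g : ι → κ) {f : κ → ℝ}
    (hf : ∀ b, 0 ≤ f b) {B : κ → ℝ} (hB : ∀ b ∈ s.image g, (#{a ∈ s | g a = b} : ℝ) ≤ B b) :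
    ∑ a ∈ s, f (g a) ≤ ∑ b ∈ s.image g, B b * f b := by
  rw [sum_comp]
  exact sum_le_sum fun b hb => by
    rw [nsmul_eq_mul]
    exact mul_le_mul_of_nonneg_right (hB b hb) (hf b)

lemma Finset.sum_pow_le_two {r : ℝ} (h₀ : 0 ≤ r) (h : r ≤ 1 / 2) (T : Finset ℕ) :
    ∑ m ∈ T, r ^ m ≤ 2 := by
  have hr : r < 1 := by linarith
  calc ∑ m ∈ T, r ^ m ≤ ∑' m, r ^ m :=
        (summable_geometric_of_lt_one h₀ hr).sum_le_tsum T fun m _ => pow_nonneg h₀ m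
    _ = (1 - r)⁻¹ := tsum_geometric_of_lt_one h₀ hr
    _ ≤ 2 := by rw [inv_le_comm₀ (by linarith) two_pos]; linarith

lemma cocycle_of_invariant {G X Y A : Type*} [Group G] [MulAction G X] [MulAction G Y]
    [AddCommGroup A] {f : X → Y → A} (hf : ∀ (g : G) x y, f (g • x) (g • y) = f x y) (o : X)
    (g h : G) (y : Y) :
    f ((g * h) • o) y - f o y = (f (g • o) y - f o y) + (f (h • o) (g⁻¹ • y) - f o (g⁻¹ • y)) := by
  have h₁ := hf g (h • o) (g⁻¹ • y)
  have h₂ := hf g o (g⁻¹ • y)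
  rw [smul_inv_smul, ← mul_smul] at h₁
  rw [smul_inv_smul] at h₂
  rw [h₁, h₂]
  abel

lemma exists_rpow_mul_le {θ : ℝ} (h₀ : 0 ≤ θ) (h₁ : θ < 1) (C : ℝ) {ε : ℝ} (hε : 0 < ε) :
    ∃ p₀ : ℝ, 1 ≤ p₀ ∧ ∀ p, p₀ ≤ p → θ ^ p * C ≤ ε := by
  have := (tendsto_rpow_atTop_of_base_lt_one θ (by linarith) h₁).mul_const C
  rw [zero_mul] at this
  obtain ⟨p₁, hp₁⟩ := Filter.eventually_atTop.1 (this.eventually (Iic_mem_nhds hε))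
  exact ⟨max 1 p₁, le_max_left _ _, fun p hp => hp₁ p (le_of_max_le_right hp)⟩

open Finsupp

/-- The distance is taken in `ℕ`. Uniform local finiteness is only required of unit balls: by
geodesicity, `K` then bounds `r`-balls by `K ^ (r + 1)`. -/
structure GoodHyperbolicSpace (X : Type*) where
  δ : ℕ
  one_le_δ : 1 ≤ δ
  d : X → X → ℕ
  d_comm : ∀ x y, d x y = d y x
  d_self : ∀ x, d x x = 0
  eq_of_d_eq_zero : ∀ {x y}, d x y = 0 → x = y
  d_triangle : ∀ x y z, d x z ≤ d x y + d y z
  four_point : ∀ x₁ x₂ x₃ x₄,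
    d x₁ x₄ + d x₂ x₃ ≤ max (d x₁ x₂ + d x₃ x₄) (d x₁ x₃ + d x₂ x₄) + δ
  geodesic : ∀ x y, ∀ k ≤ d x y, ∃ z, d x z = k ∧ k + d z y = d x y
  finite_ball : ∀ x (r : ℕ), {y | d x y ≤ r}.Finite
  K : ℕ
  one_le_K : 1 ≤ K
  card_ball_one_le : ∀ x, #(finite_ball x 1).toFinset ≤ K

lemma GoodHyperbolicSpace.exists_of_metric {X : Type*} [MetricSpace X] (δ : ℕ) (hδ : 1 ≤ δ)
    (hnat : ∀ x y : X, ∃ n : ℕ, dist x y = n)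
    (hgeo : ∀ x y : X, ∀ k : ℕ, (k : ℝ) ≤ dist x y →
      ∃ z : X, dist x z = k ∧ dist z y = dist x y - k)
    (hulf : ∀ r : ℝ, ∃ K : ℕ, ∀ x : X,
      (Metric.closedBall x r).Finite ∧ Nat.card (Metric.closedBall x r) ≤ K)
    (hhyp : ∀ x₁ x₂ x₃ x₄ : X, dist x₁ x₄ + dist x₂ x₃ ≤
      max (dist x₁ x₂ + dist x₃ x₄) (dist x₁ x₃ + dist x₂ x₄) + δ) :
    ∃ S : GoodHyperbolicSpace X, S.δ = δ ∧ ∀ x y, (S.d x y : ℝ) = dist x y := by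
  choose d hd using hnat
  have hball : ∀ x (r : ℕ), {y | d x y ≤ r} = Metric.closedBall x r := fun x r => by
    ext y
    change d x y ≤ r ↔ dist y x ≤ r
    rw [dist_comm, hd]
    exact Nat.cast_le.symm
  have hfin : ∀ x (r : ℕ), {y | d x y ≤ r}.Finite := fun x r => by
    rw [hball]
    exact ((hulf r).choose_spec x).1
  obtain ⟨K, hK⟩ := hulf 1
  refine ⟨
    { δ := δ
      one_le_δ := hδ
      d := d
      d_comm := fun x y => by exact_mod_cast (hd y x ▸ hd x y ▸ dist_comm x y)
      d_self := fun x => by exact_mod_cast hd x x ▸ dist_self x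
      eq_of_d_eq_zero := fun {x y} h => dist_eq_zero.1 (by rw [hd, h, Nat.cast_zero])
      d_triangle := fun x y z => by exact_mod_cast hd x z ▸ hd x y ▸ hd y z ▸ dist_triangle x y z
      four_point := fun x₁ x₂ x₃ x₄ => by
        have := hhyp x₁ x₂ x₃ x₄
        simp only [hd] at this
        exact_mod_cast this
      geodesic := fun x y k hk => by
        obtain ⟨z, hxz, hzy⟩ := hgeo x y k (by rw [hd]; exact_mod_cast hk)
        simp only [hd] at hxz hzy
        exact ⟨z, by exact_mod_cast hxz, by
          have : (k : ℝ) + d z y = d x y := by linarith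
          exact_mod_cast this⟩
      finite_ball := hfin
      K := max K 1
      one_le_K := le_max_right _ _
      card_ball_one_le := fun x => by
        rw [← Nat.card_eq_card_finite_toFinset, hball, Nat.cast_one]
        exact (hK x).2.trans (le_max_left _ _) }, rfl, fun x y => (hd x y).symm⟩

namespace GoodHyperbolicSpace

variable {X : Type*} (S : GoodHyperbolicSpace X)

lemma four_point_or (x₁ x₂ x₃ x₄ : X) :
    S.d x₁ x₄ + S.d x₂ x₃ ≤ S.d x₁ x₂ + S.d x₃ x₄ + S.δ ∨
      S.d x₁ x₄ + S.d x₂ x₃ ≤ S.d x₁ x₃ + S.d x₂ x₄ + S.δ := by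
  have := S.four_point x₁ x₂ x₃ x₄
  omega

def ball (x : X) (r : ℕ) : Finset X := (S.finite_ball x r).toFinset

@[simp] lemma mem_ball {x y : X} {r : ℕ} : y ∈ S.ball x r ↔ S.d x y ≤ r :=
  Set.Finite.mem_toFinset _

lemma card_ball_le_pow (x : X) (r : ℕ) : #(S.ball x r) ≤ S.K ^ (r + 1) := by
  classical
  induction r generalizing x with
  | zero =>
    have : S.ball x 0 ⊆ {x} := fun y hy => by
      simpa [eq_comm] using S.eq_of_d_eq_zero (Nat.le_zero.1 (S.mem_ball.1 hy))
    simpa using (card_le_card this).trans S.one_le_K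
  | succ r ih =>
    have hsub : S.ball x (r + 1) ⊆ (S.ball x r).biUnion (S.ball · 1) := by
      intro y hy
      obtain ⟨z, hxz, hzy⟩ := S.geodesic x y (min r (S.d x y)) (min_le_right _ _)
      exact mem_biUnion.2 ⟨z, S.mem_ball.2 (by omega), S.mem_ball.2 (by simp at hy; omega)⟩
    calc #(S.ball x (r + 1)) ≤ ∑ z ∈ S.ball x r, #(S.ball z 1) :=
          (card_le_card hsub).trans card_biUnion_le
      _ ≤ ∑ _z ∈ S.ball x r, S.K := sum_le_sum fun z _ => S.card_ball_one_le z
      _ ≤ S.K ^ (r + 1) * S.K := by rw [sum_const, smul_eq_mul]; gcongr; exact ih x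
      _ = S.K ^ (r + 1 + 1) := (pow_succ _ _).symm

def N : ℕ := S.K ^ (5 * S.δ + 1)

lemma one_le_N : 1 ≤ S.N := Nat.one_le_pow _ _ S.one_le_K

lemma card_ball_le_N (x : X) {r : ℕ} (hr : r ≤ 5 * S.δ) : #(S.ball x r) ≤ S.N :=
  (S.card_ball_le_pow x r).trans (Nat.pow_le_pow_right S.one_le_K (by omega))

def θ : ℝ := 1 - (S.N : ℝ)⁻¹

lemma θ_nonneg : 0 ≤ S.θ := by
  have : (S.N : ℝ)⁻¹ ≤ 1 := inv_le_one_of_one_le₀ (by exact_mod_cast S.one_le_N)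
  rw [θ]; linarith

lemma θ_lt_one : S.θ < 1 := by
  have : (0 : ℝ) < (S.N : ℝ)⁻¹ := inv_pos.2 (by exact_mod_cast S.one_le_N)
  rw [θ]; linarith

def numSteps (n : ℕ) : ℕ := (n - 5 * S.δ) / (2 * S.δ)

/-- From level `L ≥ 5δ` the walk towards `a` jumps to level `nextLevel L ∈ (L - 4δ, L - 2δ]`,
which is `3δ` modulo `2δ`: after one step, the walks from any two points towards `a` pass through
the same levels and stop on the sphere of radius `3δ`. -/
def nextLevel (L : ℕ) : ℕ := 3 * S.δ + 2 * S.δ * S.numSteps L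

lemma nextLevel_spec {L : ℕ} (h : 5 * S.δ ≤ L) :
    S.nextLevel L + 2 * S.δ ≤ L ∧ L < S.nextLevel L + 4 * S.δ := by
  have := Nat.div_add_mod (L - 5 * S.δ) (2 * S.δ)
  have := Nat.mod_lt (L - 5 * S.δ) (show 0 < 2 * S.δ by have := S.one_le_δ; omega)
  unfold nextLevel numSteps
  omega

lemma numSteps_three_add (j : ℕ) : S.numSteps (3 * S.δ + 2 * S.δ * (j + 1)) = j := by
  have : 3 * S.δ + 2 * S.δ * (j + 1) - 5 * S.δ = 2 * S.δ * j := by rw [mul_add]; omega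
  rw [numSteps, this, Nat.mul_div_cancel_left j (by have := S.one_le_δ; omega)]

def level (L : ℕ) : ℕ := if 5 * S.δ ≤ L then S.nextLevel L else L

lemma iterate_level {n : ℕ} (h : 5 * S.δ ≤ n) {i : ℕ} (hi : i ≤ S.numSteps n) :
    S.level^[i + 1] n = 3 * S.δ + 2 * S.δ * (S.numSteps n - i) := by
  induction i with
  | zero => simp [level, h, nextLevel]
  | succ i ih =>
    rw [Function.iterate_succ_apply', ih (by omega),
      show S.numSteps n - i = S.numSteps n - (i + 1) + 1 by omega, level,
      if_pos (by rw [mul_add]; omega), nextLevel, numSteps_three_add]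

/-- The slack `δ` in the radius makes the targets of two `4δ`-close points at the same level
overlap. -/
def target (a z : X) : Finset X :=
  (S.ball z (S.d z a - S.nextLevel (S.d z a) + S.δ)).filter
    fun w => S.d w a = S.nextLevel (S.d z a)

lemma mem_target {a z w : X} :
    w ∈ S.target a z ↔
      S.d z w ≤ S.d z a - S.nextLevel (S.d z a) + S.δ ∧ S.d w a = S.nextLevel (S.d z a) := by
  simp [target]

lemma target_nonempty {a z : X} (h : 5 * S.δ ≤ S.d z a) : (S.target a z).Nonempty := by
  have := S.nextLevel_spec h
  obtain ⟨w, hzw, hwa⟩ := S.geodesic z a (S.d z a - S.nextLevel (S.d z a)) (by omega)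
  exact ⟨w, S.mem_target.2 ⟨by omega, by omega⟩⟩

lemma card_target_le (a : X) {z : X} (h : 5 * S.δ ≤ S.d z a) : #(S.target a z) ≤ S.N :=
  (card_le_card (filter_subset _ _)).trans
    (S.card_ball_le_N z (by have := S.nextLevel_spec h; omega))

def step (a z : X) : X →₀ ℝ :=
  if 5 * S.δ ≤ S.d z a then unif (S.target a z) else single z 1

lemma step_nonneg (a z : X) : 0 ≤ S.step a z := by
  unfold step
  split
  · exact unif_nonneg _
  · exact single_nonneg.2 zero_le_one

lemma mass_step (a z : X) : mass (S.step a z) = 1 := by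
  unfold step
  split
  · exact mass_unif (S.target_nonempty ‹_›)
  · exact mass_single z 1

lemma mem_target_of_mem_support_step {a z w : X} (h : 5 * S.δ ≤ S.d z a)
    (hw : w ∈ (S.step a z).support) : w ∈ S.target a z := by
  rw [step, if_pos h] at hw
  exact support_unif_subset _ hw

def walk (a x : X) (k : ℕ) : X →₀ ℝ := (linearCombination ℝ (S.step a))^[k] (single x 1)

lemma walk_succ (a x : X) (k : ℕ) :
    S.walk a x (k + 1) = linearCombination ℝ (S.step a) (S.walk a x k) :=
  Function.iterate_succ_apply' _ _ _

lemma walk_nonneg (a x : X) (k : ℕ) : 0 ≤ S.walk a x k := by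
  induction k with
  | zero => exact single_nonneg.2 zero_le_one
  | succ k ih => rw [walk_succ]; exact linearCombination_nonneg (S.step_nonneg a) ih

lemma mass_walk (a x : X) (k : ℕ) : mass (S.walk a x k) = 1 := by
  induction k with
  | zero => exact mass_single x 1
  | succ k ih => rw [walk_succ, mass_linearCombination (S.mass_step a), ih]

lemma d_add_d_le_of_mem_target {a x z w : X} (h : 5 * S.δ ≤ S.d z a)
    (hz : S.d x z + S.d z a ≤ S.d x a + 2 * S.δ) (hw : w ∈ S.target a z) :
    S.d x w + S.d w a ≤ S.d x a + 2 * S.δ := by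
  have := S.nextLevel_spec h
  have := S.mem_target.1 hw
  have := S.d_comm a w
  rcases S.four_point_or x z a w with h' | h' <;> omega

lemma walk_support (a x : X) (k : ℕ) {w : X} (hw : w ∈ (S.walk a x k).support) :
    S.d w a = S.level^[k] (S.d x a) ∧ S.d x w + S.d w a ≤ S.d x a + 2 * S.δ := by
  induction k generalizing w with
  | zero =>
    obtain rfl : w = x := by simpa [walk] using support_single_subset hw
    simp [S.d_self]
  | succ k ih =>
    rw [walk_succ] at hw
    obtain ⟨z, hz, hwz⟩ := exists_mem_support_of_mem_support_linearCombination hw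
    obtain ⟨hza, hxz⟩ := ih hz
    rw [Function.iterate_succ_apply', ← hza, level]
    by_cases h : 5 * S.δ ≤ S.d z a
    · have hw' := S.mem_target_of_mem_support_step h hwz
      exact ⟨by rw [if_pos h]; exact (S.mem_target.1 hw').2,
        S.d_add_d_le_of_mem_target h hxz hw'⟩
    · rw [step, if_neg h] at hwz
      obtain rfl : w = z := by simpa using support_single_subset hwz
      exact ⟨by rw [if_neg h], hxz⟩

def arrival (a x : X) : X →₀ ℝ := S.walk a x (S.numSteps (S.d x a) + 1)

lemma arrival_support {a x w : X} (h : 5 * S.δ ≤ S.d x a) (hw : w ∈ (S.arrival a x).support) :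
    S.d w a = 3 * S.δ ∧ S.d x w + S.d w a ≤ S.d x a + 2 * S.δ := by
  have := S.walk_support a x _ hw
  rwa [S.iterate_level h le_rfl, Nat.sub_self, mul_zero, add_zero] at this

lemma d_le_of_fellow {a x y z z' : X} {L : ℕ} (hz : S.d z a = L) (hz' : S.d z' a = L)
    (hxz : S.d x z + L ≤ S.d x a + 2 * S.δ) (hyz' : S.d y z' + L ≤ S.d y a + 2 * S.δ)
    (hL : 2 * L + S.d x y + 10 * S.δ ≤ S.d x a + S.d y a) :
    S.d z z' ≤ 4 * S.δ := by
  have := S.d_comm a x; have := S.d_comm y z'; have := S.d_comm x y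
  have hz'x : S.d z' x + L ≤ S.d x a + 3 * S.δ := by
    rcases S.four_point_or z' y a x with h | h <;> omega
  have := S.d_comm z x; have := S.d_comm a z'; have := S.d_comm x z'
  rcases S.four_point_or z x a z' with h | h <;> omega

lemma l1Norm_step_sub_le {a z z' : X} {j : ℕ} (hz : S.d z a = 3 * S.δ + 2 * S.δ * (j + 1))
    (hz' : S.d z' a = 3 * S.δ + 2 * S.δ * (j + 1)) (hzz' : S.d z z' ≤ 4 * S.δ) :
    l1Norm (S.step a z - S.step a z') ≤ 2 * S.θ := by
  have h5 : 5 * S.δ ≤ 3 * S.δ + 2 * S.δ * (j + 1) := by rw [mul_add]; omega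
  have hnext : S.nextLevel (3 * S.δ + 2 * S.δ * (j + 1)) = 3 * S.δ + 2 * S.δ * j := by
    rw [nextLevel, numSteps_three_add]
  obtain ⟨w, hzw, hwa⟩ := S.geodesic z a (2 * S.δ) (by rw [hz, mul_add]; omega)
  have hw : w ∈ S.target a z := S.mem_target.2 (by rw [hz, hnext, mul_add] at *; omega)
  have hw' : w ∈ S.target a z' := by
    have := S.d_comm z' z; have := S.d_comm a w
    rw [S.mem_target, hz', hnext]
    rw [hz, mul_add] at hwa
    rcases S.four_point_or z' z a w with h | h <;> rw [mul_add] at * <;> omega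
  have hβ : ∀ {u}, 5 * S.δ ≤ S.d u a → w ∈ S.target a u → (S.N : ℝ)⁻¹ ≤ S.step a u w :=
    fun hu hwu => by
      rw [step, if_pos hu]
      exact inv_le_unif_apply hwu (S.card_target_le a hu)
  have := l1Norm_sub_le_of_le_apply (S.step_nonneg a z) (S.step_nonneg a z')
    (S.mass_step a z) (S.mass_step a z') (hβ (hz ▸ h5) hw) (hβ (hz' ▸ h5) hw')
  rw [θ]
  linarith

lemma l1Norm_walk_succ_sub_le {a x y : X} {kx ky j : ℕ}
    (hx : S.level^[kx] (S.d x a) = 3 * S.δ + 2 * S.δ * (j + 1))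
    (hy : S.level^[ky] (S.d y a) = 3 * S.δ + 2 * S.δ * (j + 1))
    (hxy : 2 * (3 * S.δ + 2 * S.δ * (j + 1)) + S.d x y + 10 * S.δ ≤ S.d x a + S.d y a) :
    l1Norm (S.walk a x (kx + 1) - S.walk a y (ky + 1)) ≤
      S.θ * l1Norm (S.walk a x kx - S.walk a y ky) := by
  rw [walk_succ S a x kx, walk_succ S a y ky]
  refine l1Norm_linearCombination_sub_le (S.step a) (S.walk_nonneg a x kx) (S.walk_nonneg a y ky)
    (by rw [S.mass_walk, S.mass_walk]) fun z hz z' hz' => ?_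
  obtain ⟨hza, hxz⟩ := S.walk_support a x kx hz
  obtain ⟨hz'a, hyz'⟩ := S.walk_support a y ky hz'
  rw [hx] at hza
  rw [hy] at hz'a
  exact S.l1Norm_step_sub_le hza hz'a (S.d_le_of_fellow hza hz'a (by omega) (by omega) hxy)

lemma l1Norm_arrival_sub_le_of_le {a x y : X} {t : ℕ}
    (ht : 4 * S.δ * t + S.d x y + 24 * S.δ ≤ S.d x a + S.d y a) :
    l1Norm (S.arrival a x - S.arrival a y) ≤ 2 * S.θ ^ t := by
  have hδ := S.one_le_δ
  have := S.d_triangle y x a; have := S.d_triangle x y a; have := S.d_comm y x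
  have e₁ : 4 * S.δ * t = 4 * (S.δ * t) := by ring
  have hsteps : ∀ {n}, 4 * S.δ * t + 12 * S.δ ≤ 2 * n → t ≤ S.numSteps n := fun hn => by
    rw [numSteps, Nat.le_div_iff_mul_le (by omega)]
    have e₂ : t * (2 * S.δ) = 2 * (S.δ * t) := by ring
    omega
  have htx : t ≤ S.numSteps (S.d x a) := hsteps (by omega)
  have hty : t ≤ S.numSteps (S.d y a) := hsteps (by omega)
  -- both walks are coupled from the moment they reach level `3δ + 2δt`
  have key : ∀ j ≤ t,
      l1Norm (S.walk a x (S.numSteps (S.d x a) - t + j + 1) -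
        S.walk a y (S.numSteps (S.d y a) - t + j + 1)) ≤ 2 * S.θ ^ j := by
    intro j hj
    induction j with
    | zero =>
      rw [pow_zero, mul_one]
      exact l1Norm_sub_le_two (S.walk_nonneg _ _ _) (S.walk_nonneg _ _ _) (S.mass_walk _ _ _)
        (S.mass_walk _ _ _)
    | succ j ih =>
      have hlevel : ∀ {n}, 5 * S.δ ≤ n → t ≤ S.numSteps n →
          S.level^[S.numSteps n - t + j + 1] n = 3 * S.δ + 2 * S.δ * (t - j - 1 + 1) :=
        fun h5 htn => by rw [S.iterate_level h5 (by omega)]; congr 2; omega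
      have : S.δ * (t - j - 1 + 1) ≤ S.δ * t := Nat.mul_le_mul_left _ (by omega)
      have e₂ : 2 * S.δ * (t - j - 1 + 1) = 2 * (S.δ * (t - j - 1 + 1)) := by ring
      rw [← add_assoc, ← add_assoc]
      refine (S.l1Norm_walk_succ_sub_le (hlevel (by omega) htx) (hlevel (by omega) hty)
        (by omega)).trans ?_
      rw [pow_succ]
      nlinarith [ih (by omega), S.θ_nonneg]
  simpa [arrival, Nat.sub_add_cancel htx, Nat.sub_add_cancel hty] using key t le_rfl

/-- Roughly `((x|y)_a - 12δ) / 2δ`: the number of steps the walks from `x` and `y` towards `a`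
fellow-travel. -/
def depth (x y a : X) : ℕ := (S.d x a + S.d y a - (S.d x y + 24 * S.δ)) / (4 * S.δ)

lemma arrival_nonneg (a x : X) : 0 ≤ S.arrival a x := S.walk_nonneg a x _

lemma mass_arrival (a x : X) : mass (S.arrival a x) = 1 := S.mass_walk a x _

lemma l1Norm_arrival_sub_le (a x y : X) :
    l1Norm (S.arrival a x - S.arrival a y) ≤ 2 * S.θ ^ S.depth x y a := by
  by_cases h : S.d x y + 24 * S.δ ≤ S.d x a + S.d y a
  · refine S.l1Norm_arrival_sub_le_of_le ?_
    have := Nat.div_mul_le_self (S.d x a + S.d y a - (S.d x y + 24 * S.δ)) (4 * S.δ)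
    rw [depth, mul_comm]
    omega
  · rw [depth, Nat.sub_eq_zero_of_le (by omega), Nat.zero_div, pow_zero, mul_one]
    exact l1Norm_sub_le_two (S.arrival_nonneg a x) (S.arrival_nonneg a y) (S.mass_arrival a x)
      (S.mass_arrival a y)

lemma exists_inv_N_le_arrival {a x : X} (h : 5 * S.δ ≤ S.d x a) :
    ∃ w, S.d w a = 3 * S.δ ∧ S.d x w + S.d w a ≤ S.d x a + 2 * S.δ ∧
      (S.N : ℝ)⁻¹ ≤ S.arrival a x w := by
  have hsub : (S.arrival a x).support ⊆ S.ball a (3 * S.δ) := fun w hw => by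
    rw [mem_ball, S.d_comm, (S.arrival_support h hw).1]
  have hcard : #(S.arrival a x).support ≤ S.N :=
    (card_le_card hsub).trans (S.card_ball_le_N a (by omega))
  have hne : (S.arrival a x).support.Nonempty := by
    by_contra hemp
    have := S.mass_arrival a x
    rw [mass_eq_sum subset_rfl, not_nonempty_iff_eq_empty.1 hemp, sum_empty] at this
    exact zero_ne_one this
  have hsum : ∑ _w ∈ (S.arrival a x).support, (S.N : ℝ)⁻¹ ≤
      ∑ w ∈ (S.arrival a x).support, S.arrival a x w := by
    rw [sum_const, nsmul_eq_mul, ← mass_eq_sum subset_rfl, mass_arrival, ← div_eq_mul_inv]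
    exact div_le_one_of_le₀ (by exact_mod_cast hcard) (Nat.cast_nonneg _)
  obtain ⟨w, hw, hle⟩ := exists_le_of_sum_le hne hsum
  exact ⟨w, (S.arrival_support h hw).1, (S.arrival_support h hw).2, hle⟩

lemma exists_separated_pair {x y : X} {k : ℕ} (hk : 5 * S.δ ≤ k) (hky : k + 5 * S.δ ≤ S.d x y) :
    ∃ q : X × X, S.d x q.1 = k ∧ S.d q.1 q.2 = 3 * S.δ ∧
      (S.N : ℝ)⁻¹ ≤ |S.arrival q.1 x q.2 - S.arrival q.1 y q.2| := by
  obtain ⟨a, hxa, hay⟩ := S.geodesic x y k (by omega)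
  have hya := S.d_comm y a
  have := S.one_le_δ
  obtain ⟨w, hwa, hxw, hw⟩ := S.exists_inv_N_le_arrival (a := a) (x := x) (by omega)
  have hyw : S.arrival a y w = 0 := by
    by_contra hne
    have := S.arrival_support (by omega) (mem_support_iff.2 hne)
    have := S.d_triangle x w y
    have := S.d_comm w y
    omega
  refine ⟨(a, w), hxa, by rw [S.d_comm]; exact hwa, ?_⟩
  rw [hyw, sub_zero]
  exact hw.trans (le_abs_self _)

lemma exists_finset_separated (x y : X) :
    ∃ s : Finset (X × X), (∀ q ∈ s, S.d q.1 q.2 = 3 * S.δ ∧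
      (S.N : ℝ)⁻¹ ≤ |S.arrival q.1 x q.2 - S.arrival q.1 y q.2|) ∧ S.d x y ≤ #s + 10 * S.δ := by
  classical
  have : Nonempty X := ⟨x⟩
  have := fun k => S.exists_separated_pair (x := x) (y := y) (k := k)
  choose! q hqx hq using this
  let I := Icc (5 * S.δ) (S.d x y - 5 * S.δ)
  have hI : ∀ k ∈ I, 5 * S.δ ≤ k ∧ k + 5 * S.δ ≤ S.d x y := fun k hk => by
    simp only [I, mem_Icc] at hk; omega
  refine ⟨I.image q, ?_, ?_⟩
  · simp only [mem_image]
    rintro _ ⟨k, hk, rfl⟩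
    exact hq k (hI k hk).1 (hI k hk).2
  · rw [card_image_of_injOn fun k hk k' hk' h => by
      rw [← hqx k (hI k hk).1 (hI k hk).2, ← hqx k' (hI k' hk').1 (hI k' hk').2, h]]
    simp only [I, Nat.card_Icc]
    omega

lemma target_map {φ : X ≃ X} (hφ : ∀ u v, S.d (φ u) (φ v) = S.d u v) (a z : X) :
    S.target (φ a) (φ z) = (S.target a z).map φ.toEmbedding := by
  ext w
  obtain ⟨v, rfl⟩ := φ.surjective w
  simp [mem_target, hφ]

lemma mapDomain_walk {φ : X ≃ X} (hφ : ∀ u v, S.d (φ u) (φ v) = S.d u v) (a x : X) (k : ℕ) :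
    mapDomain φ (S.walk a x k) = S.walk (φ a) (φ x) k := by
  have hstep : ∀ z, mapDomain φ (S.step a z) = S.step (φ a) (φ z) := fun z => by
    unfold step
    rw [hφ]
    split
    · rw [S.target_map hφ]
      exact mapDomain_unif φ.toEmbedding _
    · exact mapDomain_single
  induction k with
  | zero => exact mapDomain_single
  | succ k ih =>
    rw [walk_succ, walk_succ, ← ih, linearCombination_mapDomain]
    exact (apply_linearCombination ℝ (lmapDomain ℝ ℝ φ) _ _).trans
      (congrArg (linearCombination ℝ · _) (funext hstep))

lemma arrival_map {φ : X ≃ X} (hφ : ∀ u v, S.d (φ u) (φ v) = S.d u v) (a x w : X) :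
    S.arrival (φ a) (φ x) (φ w) = S.arrival a x w := by
  rw [arrival, arrival, hφ, ← S.mapDomain_walk hφ, mapDomain_apply φ.injective]

lemma arrival_smul {G : Type*} [Group G] [MulAction G X]
    (hG : ∀ (g : G) u v, S.d (g • u) (g • v) = S.d u v) (g : G) (a x w : X) :
    S.arrival (g • a) (g • x) (g • w) = S.arrival a x w := by
  simpa only [MulAction.toPerm_apply] using
    S.arrival_map (φ := MulAction.toPerm g) (by simpa using hG g) a x w

lemma exists_geodesic (x y : X) :
    ∃ γ : ℕ → X, ∀ k ≤ S.d x y, S.d x (γ k) = k ∧ k + S.d (γ k) y = S.d x y := by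
  have : Nonempty X := ⟨x⟩
  choose! γ hγ using S.geodesic x y
  exact ⟨γ, hγ⟩

lemma exists_geodesic_point_near {x y : X} {γ : ℕ → X}
    (hγ : ∀ k ≤ S.d x y, S.d x (γ k) = k ∧ k + S.d (γ k) y = S.d x y) (a : X) :
    ∃ k ≤ S.d x y, 2 * S.d (γ k) a + S.d x y ≤ S.d x a + S.d y a + 2 * S.δ + 2 := by
  have := S.d_triangle y x a; have := S.d_triangle x y a; have := S.d_comm y x
  set k := (S.d x a + S.d x y - S.d y a) / 2
  obtain ⟨hxk, hky⟩ := hγ k (by omega)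
  refine ⟨k, by omega, ?_⟩
  have := S.d_comm a x; have := S.d_comm a y; have := S.d_comm y (γ k); have := S.d_comm a (γ k)
  rcases S.four_point_or a x y (γ k) with h | h <;> omega

lemma card_filter_depth_eq_le (x y : X) (A : Finset X) (m : ℕ) :
    #{a ∈ A | S.depth x y a = m} ≤ (S.d x y + 1) * S.K ^ (2 * S.δ * m + 18 * S.δ + 1) := by
  classical
  obtain ⟨γ, hγ⟩ := S.exists_geodesic x y
  have hsub : {a ∈ A | S.depth x y a = m} ⊆
      (range (S.d x y + 1)).biUnion fun k => S.ball (γ k) (2 * S.δ * m + 18 * S.δ) := by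
    intro a ha
    obtain ⟨k, hk, hnear⟩ := S.exists_geodesic_point_near hγ a
    have hdepth : S.d x a + S.d y a - (S.d x y + 24 * S.δ) < (m + 1) * (4 * S.δ) := by
      rw [← (mem_filter.1 ha).2, depth]
      exact Nat.lt_mul_of_div_lt (Nat.lt_succ_self _) (by have := S.one_le_δ; omega)
    refine mem_biUnion.2 ⟨k, mem_range.2 (by omega), S.mem_ball.2 ?_⟩
    have e₁ : (m + 1) * (4 * S.δ) = 4 * (S.δ * m) + 4 * S.δ := by ring
    have e₂ : 2 * S.δ * m = 2 * (S.δ * m) := by ring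
    rw [S.d_comm] at hnear ⊢
    omega
  calc _ ≤ ∑ k ∈ range (S.d x y + 1), #(S.ball (γ k) (2 * S.δ * m + 18 * S.δ)) :=
        (card_le_card hsub).trans card_biUnion_le
    _ ≤ ∑ _k ∈ range (S.d x y + 1), S.K ^ (2 * S.δ * m + 18 * S.δ + 1) :=
        sum_le_sum fun k _ => S.card_ball_le_pow _ _
    _ = _ := by rw [sum_const, card_range, smul_eq_mul]

lemma sum_pow_depth_le {Θ : ℝ} (hΘ₀ : 0 ≤ Θ) (hΘ : Θ * S.K ^ (2 * S.δ) ≤ 1 / 2) (x y : X)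
    (A : Finset X) :
    ∑ a ∈ A, Θ ^ S.depth x y a ≤ (S.d x y + 1) * S.K ^ (18 * S.δ + 1) * 2 := by
  classical
  calc ∑ a ∈ A, Θ ^ S.depth x y a
      ≤ ∑ m ∈ A.image (S.depth x y),
          (S.d x y + 1) * S.K ^ (18 * S.δ + 1) * (S.K : ℝ) ^ (2 * S.δ * m) * Θ ^ m := by
        refine sum_comp_le A _ (pow_nonneg hΘ₀) fun m _ => ?_
        calc (#{a ∈ A | S.depth x y a = m} : ℝ)
            ≤ ((S.d x y + 1) * S.K ^ (2 * S.δ * m + 18 * S.δ + 1) : ℕ) := by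
              exact_mod_cast S.card_filter_depth_eq_le x y A m
          _ = _ := by push_cast; ring
    _ = (S.d x y + 1) * S.K ^ (18 * S.δ + 1) *
          ∑ m ∈ A.image (S.depth x y), (Θ * S.K ^ (2 * S.δ)) ^ m := by
        rw [Finset.mul_sum]
        refine sum_congr rfl fun m _ => ?_
        rw [mul_pow, ← pow_mul]
        ring
    _ ≤ _ := by
        gcongr
        exact sum_pow_le_two (by positivity) hΘ _

lemma sum_pow_depth_fst_le {Θ : ℝ} (hΘ₀ : 0 ≤ Θ) (hΘ : Θ * S.K ^ (2 * S.δ) ≤ 1 / 2) (x y : X)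
    {s : Finset (X × X)} (hs : ∀ q ∈ s, S.d q.1 q.2 ≤ 4 * S.δ) :
    ∑ q ∈ s, Θ ^ S.depth x y q.1 ≤
      S.K ^ (4 * S.δ + 1) * ((S.d x y + 1) * S.K ^ (18 * S.δ + 1) * 2) := by
  classical
  calc ∑ q ∈ s, Θ ^ S.depth x y q.1
      ≤ ∑ a ∈ s.image Prod.fst, (S.K : ℝ) ^ (4 * S.δ + 1) * Θ ^ S.depth x y a := by
        refine sum_comp_le s Prod.fst (f := fun a => Θ ^ S.depth x y a)
          (fun _ => pow_nonneg hΘ₀ _) fun a _ => ?_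
        have hinj : #{q ∈ s | q.1 = a} ≤ #(S.ball a (4 * S.δ)) :=
          card_le_card_of_injOn Prod.snd
            (fun q hq => by
              rw [mem_coe, mem_filter] at hq
              exact S.mem_ball.2 (hq.2 ▸ hs q hq.1))
            fun q hq q' hq' h =>
              Prod.ext ((mem_filter.1 hq).2.trans (mem_filter.1 hq').2.symm) h
        exact_mod_cast hinj.trans (S.card_ball_le_pow a _)
    _ ≤ _ := by
        rw [← Finset.mul_sum]
        gcongr
        exact S.sum_pow_depth_le hΘ₀ hΘ x y _

lemma sum_rpow_arrival_sub_le {p : ℝ} (hp : 0 < p) (hΘ : S.θ ^ p * S.K ^ (2 * S.δ) ≤ 1 / 2)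
    (x y : X) {s : Finset (X × X)} (hs : ∀ q ∈ s, S.d q.1 q.2 ≤ 4 * S.δ) :
    ∑ q ∈ s, |S.arrival q.1 x q.2 - S.arrival q.1 y q.2| ^ p ≤
      2 ^ p * (S.K ^ (4 * S.δ + 1) * ((S.d x y + 1) * S.K ^ (18 * S.δ + 1) * 2)) := by
  have hθ := S.θ_nonneg
  calc ∑ q ∈ s, |S.arrival q.1 x q.2 - S.arrival q.1 y q.2| ^ p
      ≤ ∑ q ∈ s, 2 ^ p * (S.θ ^ p) ^ S.depth x y q.1 := by
        refine sum_le_sum fun q _ => ?_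
        have := (abs_apply_le_l1Norm _ q.2).trans (S.l1Norm_arrival_sub_le q.1 x y)
        rw [Real.rpow_pow_comm hθ, ← Real.mul_rpow zero_le_two (by positivity)]
        exact Real.rpow_le_rpow (abs_nonneg _) this hp.le
    _ ≤ _ := by
        rw [← Finset.mul_sum]
        gcongr
        exact S.sum_pow_depth_fst_le (by positivity) hΘ x y hs

lemma memℓp_arrival_sub {ι : Type*} (e : ι ↪ X × X) (he : ∀ i, S.d (e i).1 (e i).2 ≤ 4 * S.δ)
    {p : ℝ} (hp : 0 < p) (hΘ : S.θ ^ p * S.K ^ (2 * S.δ) ≤ 1 / 2) (x y : X) :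
    Memℓp (fun i => S.arrival (e i).1 x (e i).2 - S.arrival (e i).1 y (e i).2)
      (ENNReal.ofReal p) := by
  refine memℓp_gen'
    (C := 2 ^ p * (S.K ^ (4 * S.δ + 1) * ((S.d x y + 1) * S.K ^ (18 * S.δ + 1) * 2))) fun s => ?_
  rw [ENNReal.toReal_ofReal hp.le]
  simpa only [Real.norm_eq_abs, sum_map] using
    S.sum_rpow_arrival_sub_le hp hΘ x y (s := s.map e) (by simpa using fun i _ => he i)

lemma d_le_norm_rpow {ι : Type*} (e : ι ↪ X × X)
    (he : ∀ q, S.d q.1 q.2 = 3 * S.δ → q ∈ Set.range e) {p : ℝ} (hp : 0 < p) (x y : X)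
    (f : lp (fun _ : ι => ℝ) (ENNReal.ofReal p))
    (hf : ∀ i, f i = S.arrival (e i).1 x (e i).2 - S.arrival (e i).1 y (e i).2) :
    (S.d x y : ℝ) ≤ (S.N : ℝ) ^ p * ‖f‖ ^ p + 10 * S.δ := by
  classical
  obtain ⟨s, hs, hcard⟩ := S.exists_finset_separated x y
  set t := s.preimage e e.injective.injOn
  have ht : #t = #s := by
    rw [card_preimage, filter_true_of_mem fun q hq => he q (hs q hq).1]
  have hN : (0 : ℝ) < S.N := by exact_mod_cast S.one_le_N
  have hsum : (#s : ℝ) * ((S.N : ℝ) ^ p)⁻¹ ≤ ‖f‖ ^ p := by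
    calc (#s : ℝ) * ((S.N : ℝ) ^ p)⁻¹ = ∑ _i ∈ t, ((S.N : ℝ)⁻¹) ^ p := by
          rw [sum_const, ht, nsmul_eq_mul, Real.inv_rpow hN.le]
      _ ≤ ∑ i ∈ t, ‖f i‖ ^ p := sum_le_sum fun i hi => by
          rw [Real.norm_eq_abs, hf]
          exact Real.rpow_le_rpow (by positivity) (hs (e i) (mem_preimage.1 hi)).2 hp.le
      _ ≤ ‖f‖ ^ p := by
          simpa [ENNReal.toReal_ofReal hp.le] using
            lp.sum_rpow_le_norm_rpow (by rwa [ENNReal.toReal_ofReal hp.le]) f t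
  have hNp : (0 : ℝ) < (S.N : ℝ) ^ p := Real.rpow_pos_of_pos hN p
  have : (#s : ℝ) ≤ (S.N : ℝ) ^ p * ‖f‖ ^ p := by
    rw [← div_le_iff₀' hNp, div_eq_mul_inv]
    exact hsum
  have : (S.d x y : ℝ) ≤ #s + 10 * S.δ := by exact_mod_cast hcard
  linarith

end GoodHyperbolicSpace

end

/-- Corollary 4.2 of Alvarez–Lafforgue. A group `G` acting isometrically and metrically
properly on a nonempty good discrete hyperbolic space `(X, d)` (δ-hyperbolic for an
integer `δ ≥ 1`) admits, for all sufficiently large real `p`, a proper cocycle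
`b : G → ℓ^p(X^{≤4δ})` for the permutation representation. -/
theorem exists_proper_lp_cocycle_good_discrete_hyperbolic
    {X : Type*} [MetricSpace X] [Nonempty X] {G : Type*} [Group G] [MulAction G X]
    (δ : ℤ) (hδ : 1 ≤ δ)
    (hnat : ∀ x y : X, ∃ n : ℕ, dist x y = n)
    (hgeo : ∀ x y : X, ∀ k : ℕ, (k : ℝ) ≤ dist x y →
      ∃ z : X, dist x z = k ∧ dist z y = dist x y - k)
    (hulf : ∀ r : ℝ, ∃ K : ℕ, ∀ x : X,
      (Metric.closedBall x r).Finite ∧ Nat.card (Metric.closedBall x r) ≤ K)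
    (hhyp : ∀ x₁ x₂ x₃ x₄ : X, dist x₁ x₄ + dist x₂ x₃ ≤
      max (dist x₁ x₂ + dist x₃ x₄) (dist x₁ x₃ + dist x₂ x₄) + (δ : ℝ))
    (hiso : ∀ (g : G) (x y : X), dist (g • x) (g • y) = dist x y)
    (hproper : ∀ (o : X) (M : ℝ), {g : G | dist o (g • o) ≤ M}.Finite) :
    ∃ p₀ : ℝ, 1 ≤ p₀ ∧ ∀ p : ℝ, p₀ ≤ p →
      ∃ b : G → lp (fun _ : {q : X × X // dist q.1 q.2 ≤ 4 * (δ : ℝ)} => ℝ)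
          (ENNReal.ofReal p),
        -- cocycle identity `b (g h) = b g + π g (b h)` where `(π g f) (x, y) = f (g⁻¹ x, g⁻¹ y)`
        (∀ g h : G, ∀ q : {q : X × X // dist q.1 q.2 ≤ 4 * (δ : ℝ)},
          (b (g * h) : _ → ℝ) q = (b g : _ → ℝ) q +
            (b h : _ → ℝ) ⟨(g⁻¹ • q.val.1, g⁻¹ • q.val.2), by
              rw [hiso]; exact q.property⟩) ∧
        -- properness of the cocycle
        (∀ M : ℝ, 0 ≤ M → {g : G | ‖b g‖ ≤ M}.Finite) := by
  lift δ to ℕ using by omega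
  obtain ⟨S, rfl, hd⟩ := GoodHyperbolicSpace.exists_of_metric δ (by exact_mod_cast hδ) hnat hgeo
    hulf (by simpa using hhyp)
  have hSiso : ∀ (g : G) u v, S.d (g • u) (g • v) = S.d u v := fun g u v => by
    exact_mod_cast (hd _ _).trans ((hiso g u v).trans (hd u v).symm)
  let e : {q : X × X // dist q.1 q.2 ≤ 4 * ((S.δ : ℤ) : ℝ)} ↪ X × X :=
    Function.Embedding.subtype _
  have he₄ : ∀ i, S.d (e i).1 (e i).2 ≤ 4 * S.δ := fun i => by
    exact_mod_cast (hd _ _).trans_le i.2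
  have he₃ : ∀ q, S.d q.1 q.2 = 3 * S.δ → q ∈ Set.range e := fun q hq =>
    ⟨⟨q, by rw [← hd, hq]; push_cast; linarith⟩, rfl⟩
  obtain ⟨p₀, hp₀, hΘ⟩ :=
    exists_rpow_mul_le S.θ_nonneg S.θ_lt_one ((S.K : ℝ) ^ (2 * S.δ)) one_half_pos
  refine ⟨p₀, hp₀, fun p hp => ?_⟩
  have hp₁ : 0 < p := by linarith
  let o : X := Classical.arbitrary X
  let b := fun g : G =>
    (⟨_, S.memℓp_arrival_sub e he₄ hp₁ (hΘ p hp) (g • o) o⟩ : lp _ (ENNReal.ofReal p))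
  refine ⟨b, fun g h q => ?_, fun M _ => (hproper o (S.N ^ p * M ^ p + 10 * S.δ)).subset
    fun g hg => ?_⟩
  · have := cocycle_of_invariant (G := G) (Y := X × X) (f := fun x q => S.arrival q.1 x q.2)
      (fun g x q => S.arrival_smul hSiso g q.1 x q.2) o g h q.1
    exact this
  · have h₁ := S.d_le_norm_rpow e he₃ hp₁ (g • o) o (b g) fun _ => rfl
    have h₂ : ‖b g‖ ^ p ≤ M ^ p := Real.rpow_le_rpow (lp.norm_nonneg' _) hg hp₁.le
    change dist o (g • o) ≤ _
    rw [dist_comm, ← hd]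
    nlinarith [Real.rpow_nonneg (Nat.cast_nonneg S.N) p]
end

section
/- Let (X,d) be a metric space which is δ-hyperbolic for some real δ ≥ 0, weakly δ₀-geodesic for some real δ₀ ≥ 0, and uniformly locally finite, equipped with an isometric action of a group G. Then there exists a G-equivariant map assigning to each pair (x,a) ∈ X × X a finitely supported probability measure μ_x(a) on X (G-equivariance means μ_{g·x}(g·a)(g·y) = μ_x(a)(y)) such that: (i) there exists R ∈ ℕ with supp μ_x(a) contained in the closed ball B(a,R) for all x,a ∈ X; (ii) there exists a real ε > 0 such that for every k ∈ ℕ there is C > 0 with: for all x, x', a ∈ X, if d(x,x') ≤ k then ‖μ_x(a) − μ_{x'}(a)‖₁ ≤ C·exp(−ε·d(x,a)); (iii) there exist a real η > 0 and N ∈ ℕ such that for all x,x' ∈ X with d(x,x') ≥ N, the set of a ∈ X for which supp μ_x(a) and supp μ_{x'}(a) are disjoint is finite of cardinality at least η·d(x,x'). -/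
/-!
`μ x a` is the law of the endpoint of a random walk from `x` towards `a`. From a point `u` at
level `n`, i.e. with `r (n - 1) < d(u, a) ≤ r n`, the walk jumps to a uniform point of the step
set of `u`: the points `z` with `d(z, a) ≤ r (n - 1)` and `d(u, z) ≤ d(u, a) - r (n - 1) + σ`,
which lie within `σ` of that sphere about `a`, almost on a geodesic from `u` to `a`. It stops
within `2r` of `a`. Being defined from the metric alone, `μ` is equivariant.

Decay: by `δ`-hyperbolicity, two points of the same level whose distance exceeds the sum of
their heights above the next sphere by little (`pairExcess`) have step sets that share a point
and consist again of such pairs. Averaging over step sets with a common point contracts the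
`ℓ¹` distance by `1 - K⁻²`, `K` bounding the size of step sets, once per level; points at
distance `≤ k` are joined by a chain of weakly geodesic points.

Disjoint supports: the same four-point argument, propagated along the walk, puts the support of
`μ x a` on the `2r`-sphere about `a`, within `σ + δ` of a geodesic from `x` to `a`. So the
supports of `μ x a` and `μ x' a` are disjoint when `a` lies far from `x` and `x'` on a
quasi-geodesic from `x` to `x'`, which gives linearly many such `a`. There are finitely many:
disjoint supports mean `ℓ¹` distance `2`, which the decay excludes once `a` is far from `x`.
-/

open Metric

section

variable {X : Type*} [MetricSpace X]

def IsHyperbolic (X : Type*) [MetricSpace X] (δ : ℝ) : Prop :=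
  ∀ x₁ x₂ x₃ x₄ : X, dist x₁ x₄ + dist x₂ x₃ ≤
    max (dist x₁ x₂ + dist x₃ x₄) (dist x₁ x₃ + dist x₂ x₄) + δ

def IsWeaklyGeodesic (X : Type*) [MetricSpace X] (δ₀ : ℝ) : Prop :=
  ∀ x y : X, ∀ s : ℝ, 0 ≤ s → s ≤ dist x y + δ₀ →
    ∃ z : X, dist x z ≤ s ∧ dist z y ≤ dist x y - s + δ₀

namespace IsHyperbolic

variable {δ : ℝ} (hX : IsHyperbolic X δ)
include hX

theorem le_or_le (x₁ x₂ x₃ x₄ : X) :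
    dist x₁ x₄ + dist x₂ x₃ ≤ dist x₁ x₂ + dist x₃ x₄ + δ ∨
      dist x₁ x₄ + dist x₂ x₃ ≤ dist x₁ x₃ + dist x₂ x₄ + δ :=
  le_max_iff.1 ((hX x₁ x₂ x₃ x₄).trans_eq (max_add_add_right _ _ _).symm)

theorem dist_le_of_descend (hδ : 0 ≤ δ) {x x' z z' a : X} {L c : ℝ}
    (hz : dist z a ≤ L) (hxz : dist x z ≤ dist x a - L + c)
    (hz' : dist z' a ≤ L) (hxz' : dist x' z' ≤ dist x' a - L + c) :
    dist z z' ≤ max (c + 3 * δ / 2) (dist x x' - (dist x a - L) - (dist x' a - L) + 3 * δ) := by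
  rcases hX.le_or_le z a x' z' with A | A
  · simp only [dist_comm] at *; exact le_max_of_le_left (by linarith)
  rcases hX.le_or_le z' a x z with B | B
  · simp only [dist_comm] at *; exact le_max_of_le_left (by linarith)
  rcases hX.le_or_le z z' x x' with C | C
  · simp only [dist_comm] at *; exact le_max_of_le_right (by linarith)
  · simp only [dist_comm] at *; exact le_max_of_le_left (by linarith)

theorem exists_common_descend {δ₀ : ℝ} (hgeo : IsWeaklyGeodesic X δ₀) {u u' a : X} {L : ℝ}
    (hL : 0 ≤ L) (hLu : L ≤ dist u a + δ₀) :
    ∃ w, dist w a ≤ L ∧ dist u w ≤ dist u a - L + δ₀ ∧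
      dist u' w ≤ dist u' a - L + max δ₀ (dist u u' - (dist u a - L) - (dist u' a - L)) + δ := by
  obtain ⟨w, hw, hwu⟩ := hgeo a u L hL (by rwa [dist_comm])
  refine ⟨w, by rwa [dist_comm], by rw [dist_comm u, dist_comm u]; linarith, ?_⟩
  have := le_max_left δ₀ (dist u u' - (dist u a - L) - (dist u' a - L))
  have := le_max_right δ₀ (dist u u' - (dist u a - L) - (dist u' a - L))
  rcases hX.le_or_le u' u a w with A | A <;> simp only [dist_comm] at * <;> linarith

theorem excess_le_of_step {x w u a : X} {E c : ℝ}
    (hxw : dist x w ≤ dist x a - dist w a + E) (hwu : dist w u ≤ dist w a - dist u a + c)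
    (hgap : δ / 2 ≤ dist w a - dist u a) :
    dist x u ≤ dist x a - dist u a + max E (c + δ) := by
  have := le_max_left E (c + δ)
  have := le_max_right E (c + δ)
  rcases hX.le_or_le x w a u with A | A <;> linarith [dist_comm a u]

end IsHyperbolic

/-- The points are taken at spacing `δ₀ + 1` along `x x'`, so that their distances to `x`
fall into disjoint intervals. -/
theorem IsWeaklyGeodesic.le_card_of_forall_mem {δ₀ : ℝ} (hgeo : IsWeaklyGeodesic X δ₀)
    (hδ₀ : 0 ≤ δ₀) {D : Set X} (hD : D.Finite) {x x' : X} {lo : ℝ} {M : ℕ} (hlo : 0 ≤ lo)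
    (hM : 2 * lo + (δ₀ + 1) * M ≤ dist x x')
    (hband : ∀ z, lo ≤ dist x z → lo ≤ dist z x' → dist x z + dist z x' ≤ dist x x' + δ₀ → z ∈ D) :
    M ≤ Nat.card D := by
  have hpt : ∀ k : Fin M, ∃ z, dist x z ≤ lo + δ₀ + (δ₀ + 1) * k ∧
      dist z x' ≤ dist x x' - (lo + δ₀ + (δ₀ + 1) * k) + δ₀ := fun k => by
    have : (k : ℝ) + 1 ≤ M := by exact_mod_cast k.isLt
    exact hgeo x x' _ (by positivity) (by nlinarith)
  choose f hf using hpt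
  have hlow : ∀ k, lo + (δ₀ + 1) * k ≤ dist x (f k) := fun k => by
    linarith [(hf k).2, dist_triangle x (f k) x']
  have hfD : ∀ k, f k ∈ D := fun k => by
    have : (k : ℝ) + 1 ≤ M := by exact_mod_cast k.isLt
    refine hband _ (by nlinarith [hlow k]) ?_ (by linarith [hf k])
    nlinarith [(hf k).1, dist_triangle x (f k) x']
  have hmono : ∀ k l, f k = f l → (k : ℕ) ≤ l := fun k l hkl => by
    by_contra hlt
    have : (l : ℝ) + 1 ≤ k := by exact_mod_cast not_le.1 hlt
    have := hlow k
    rw [hkl] at this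
    nlinarith [(hf l).1]
  have : Finite D := hD.to_subtype
  simpa using Nat.card_le_card_of_injective (fun k => (⟨f k, hfD k⟩ : D))
    fun k l hkl => Fin.ext (le_antisymm (hmono k l (congrArg Subtype.val hkl))
      (hmono l k (congrArg Subtype.val hkl).symm))

section Average

open Finset

variable {α β : Type*} {S S' : Finset α} (Y : Finset β) (A : α → β → ℝ)

theorem avg_sub_avg_eq (hS : S.Nonempty) (hS' : S'.Nonempty) (y : β) :
    (#S : ℝ)⁻¹ * ∑ z ∈ S, A z y - (#S' : ℝ)⁻¹ * ∑ z ∈ S', A z y =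
      ((#S : ℝ) * #S')⁻¹ * ∑ p ∈ S ×ˢ S', (A p.1 y - A p.2 y) := by
  have := hS.card_pos; have := hS'.card_pos
  simp_rw [sum_product, sum_sub_distrib, sum_const, nsmul_eq_mul, ← mul_sum]
  field_simp

theorem sum_abs_avg_sub_avg_le (hS : S.Nonempty) (hS' : S'.Nonempty) :
    ∑ y ∈ Y, |(#S : ℝ)⁻¹ * ∑ z ∈ S, A z y - (#S' : ℝ)⁻¹ * ∑ z ∈ S', A z y| ≤
      ((#S : ℝ) * #S')⁻¹ * ∑ p ∈ S ×ˢ S', ∑ y ∈ Y, |A p.1 y - A p.2 y| := by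
  simp_rw [avg_sub_avg_eq A hS hS', abs_mul, ← mul_sum]
  rw [abs_of_nonneg (by positivity)]
  gcongr
  rw [sum_comm]
  exact sum_le_sum fun y _ => abs_sum_le_sum_abs _ _

theorem sum_abs_avg_sub_avg_le_of_forall (hS : S.Nonempty) (hS' : S'.Nonempty) {M : ℝ}
    (h : ∀ z ∈ S, ∀ z' ∈ S', ∑ y ∈ Y, |A z y - A z' y| ≤ M) :
    ∑ y ∈ Y, |(#S : ℝ)⁻¹ * ∑ z ∈ S, A z y - (#S' : ℝ)⁻¹ * ∑ z ∈ S', A z y| ≤ M := by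
  refine (sum_abs_avg_sub_avg_le Y A hS hS').trans ?_
  have := hS.card_pos; have := hS'.card_pos
  rw [inv_mul_le_iff₀ (by positivity)]
  calc ∑ p ∈ S ×ˢ S', ∑ y ∈ Y, |A p.1 y - A p.2 y| ≤ ∑ p ∈ S ×ˢ S', M :=
        sum_le_sum fun p hp => h _ (mem_product.1 hp).1 _ (mem_product.1 hp).2
    _ = #S * #S' * M := by rw [sum_const, card_product, nsmul_eq_mul]; push_cast; ring

theorem sum_abs_avg_sub_avg_le_of_mem_inter (hS : S.Nonempty) (hS' : S'.Nonempty) {M : ℝ}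
    {z₀ : α} (h₀ : z₀ ∈ S) (h₀' : z₀ ∈ S')
    (h : ∀ z ∈ S, ∀ z' ∈ S', ∑ y ∈ Y, |A z y - A z' y| ≤ M) :
    ∑ y ∈ Y, |(#S : ℝ)⁻¹ * ∑ z ∈ S, A z y - (#S' : ℝ)⁻¹ * ∑ z ∈ S', A z y| ≤
      (1 - ((#S : ℝ) * #S')⁻¹) * M := by
  classical
  refine (sum_abs_avg_sub_avg_le Y A hS hS').trans ?_
  have := hS.card_pos; have := hS'.card_pos
  have hmem : (z₀, z₀) ∈ S ×ˢ S' := mem_product.2 ⟨h₀, h₀'⟩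
  rw [← add_sum_erase _ _ hmem]
  calc ((#S : ℝ) * #S')⁻¹ * (∑ y ∈ Y, |A z₀ y - A z₀ y| +
        ∑ p ∈ (S ×ˢ S').erase (z₀, z₀), ∑ y ∈ Y, |A p.1 y - A p.2 y|)
      ≤ ((#S : ℝ) * #S')⁻¹ * (0 + ∑ p ∈ (S ×ˢ S').erase (z₀, z₀), M) := by
        simp only [sub_self, abs_zero, sum_const_zero]
        gcongr with p hp
        obtain ⟨hp1, hp2⟩ := mem_product.1 (mem_of_mem_erase hp)
        exact h _ hp1 _ hp2
    _ = (1 - ((#S : ℝ) * #S')⁻¹) * M := by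
        rw [sum_const, card_erase_of_mem hmem, card_product, nsmul_eq_mul,
          Nat.cast_sub (Nat.one_le_iff_ne_zero.2 (by positivity))]
        push_cast
        field_simp
        ring

end Average

/-- For `K = 0` the value is `1 - 0⁻¹ = 1`. -/
theorem one_sub_inv_sq_nonneg (K : ℕ) : 0 ≤ 1 - ((K : ℝ) ^ 2)⁻¹ := by
  rcases K.eq_zero_or_pos with rfl | hK
  · simp
  · have : (1 : ℝ) ≤ (K : ℝ) ^ 2 := by exact_mod_cast Nat.one_le_pow _ _ hK
    linarith [inv_le_one_of_one_le₀ this]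

theorem one_sub_inv_sq_lt_one {K : ℕ} (hK : 1 ≤ K) : 1 - ((K : ℝ) ^ 2)⁻¹ < 1 := by
  have : (0 : ℝ) < K := by exact_mod_cast hK
  linarith [inv_pos.2 (pow_pos this 2)]

theorem one_sub_inv_mul_le_one_sub_inv_sq {k k' K : ℕ} (hk : 0 < k) (hk' : 0 < k') (hkK : k ≤ K)
    (hk'K : k' ≤ K) : 1 - ((k : ℝ) * k')⁻¹ ≤ 1 - ((K : ℝ) ^ 2)⁻¹ := by
  have : (k : ℝ) * k' ≤ (K : ℝ) ^ 2 := by rw [sq]; gcongr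
  have := inv_anti₀ (by positivity) this
  linarith

/-- The rate `(1 - β) / r` comes from `β ≤ exp (β - 1)`. -/
theorem le_mul_exp_of_forall_le_pow {f A β r b t : ℝ} (hβ₀ : 0 ≤ β) (hβ₁ : β ≤ 1) (hr : 0 < r)
    (hA : 0 ≤ A) (hf : f ≤ A) (h : ∀ j : ℕ, b + r * j ≤ t → f ≤ A * β ^ j) :
    f ≤ A * Real.exp ((1 - β) / r * (b + r)) * Real.exp (-((1 - β) / r) * t) := by
  set ε := (1 - β) / r
  have hε : 0 ≤ ε := div_nonneg (by linarith) hr.le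
  rw [mul_assoc, ← Real.exp_add]
  rcases lt_or_ge t b with htb | hbt
  · exact hf.trans (le_mul_of_one_le_right hA (Real.one_le_exp (by nlinarith)))
  set j := ⌊(t - b) / r⌋₊
  have hj₁ : r * j ≤ t - b := (le_div_iff₀' hr).1 (Nat.floor_le (div_nonneg (by linarith) hr.le))
  have hj₂ : t - b < r * (j + 1) := (div_lt_iff₀' hr).1 (Nat.lt_floor_add_one _)
  refine (h j (by linarith)).trans (mul_le_mul_of_nonneg_left ?_ hA)
  calc β ^ j ≤ Real.exp (β - 1) ^ j :=
        pow_le_pow_left₀ hβ₀ (by linarith [Real.add_one_le_exp (β - 1)]) j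
    _ = Real.exp (-(ε * (r * j))) := by
        rw [← Real.exp_nat_mul]; congr 1; simp only [ε]; field_simp; ring
    _ ≤ Real.exp (ε * (b + r) + -ε * t) := Real.exp_le_exp.2 (by nlinarith)

namespace Descent

noncomputable def level (r : ℝ) (x a : X) : ℕ := ⌈dist x a / r⌉₊

noncomputable def stepRadius (r : ℝ) (x a : X) : ℝ := r * ((level r x a : ℝ) - 1)

def stepSet (r σ : ℝ) (x a : X) : Set X :=
  {z | dist z a ≤ stepRadius r x a ∧ dist x z ≤ dist x a - stepRadius r x a + σ}

/-- `descentAux n x a` is `descentMeasure r σ x a` when `n = level r x a`: recursing on the level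
makes the definition structural. -/
noncomputable def descentAux (r σ : ℝ) : ℕ → X → X → X → ℝ
  | n + 3, x, a, y =>
    (Nat.card (stepSet r σ x a) : ℝ)⁻¹ * ∑ᶠ z ∈ stepSet r σ x a, descentAux r σ (n + 2) z a y
  | _, x, _, y => open Classical in if y = x then 1 else 0

noncomputable def descentMeasure (r σ : ℝ) (x a : X) : X → ℝ :=
  descentAux r σ (level r x a) x a

noncomputable def pairExcess (r : ℝ) (x x' a : X) : ℝ :=
  dist x x' - (dist x a - stepRadius r x a) - (dist x' a - stepRadius r x' a)

variable {δ δ₀ r σ : ℝ} {K n : ℕ} {x x' z z' a y : X}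

local notation "μ" => descentMeasure r σ

section Level

variable (hr : 0 < r)
include hr

theorem level_le_iff : level r x a ≤ n ↔ dist x a ≤ r * n := by
  rw [level, Nat.ceil_le, div_le_iff₀' hr]

theorem lt_level_iff : n < level r x a ↔ r * n < dist x a := by
  rw [level, Nat.lt_ceil, lt_div_iff₀' hr]

theorem level_le_two_iff : level r x a ≤ 2 ↔ dist x a ≤ 2 * r := by
  rw [level_le_iff hr, mul_comm]; norm_num

theorem dist_le_stepRadius_add : dist x a ≤ stepRadius r x a + r := by
  have := (level_le_iff hr (n := level r x a)).1 le_rfl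
  rw [stepRadius]; linarith

theorem stepRadius_lt_dist : stepRadius r x a < dist x a := by
  have := Nat.ceil_lt_add_one (div_nonneg (dist_nonneg (x := x) (y := a)) hr.le)
  rw [stepRadius, level]
  have h := mul_lt_mul_of_pos_left this hr
  rw [mul_add, mul_div_cancel₀ _ hr.ne'] at h
  linarith

theorem pairExcess_le_dist : pairExcess r x x' a ≤ dist x x' := by
  have := stepRadius_lt_dist hr (x := x) (a := a)
  have := stepRadius_lt_dist hr (x := x') (a := a)
  unfold pairExcess; linarith

end Level

theorem stepRadius_eq (h : level r x a = n + 1) : stepRadius r x a = r * n := by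
  rw [stepRadius, h]; push_cast; ring

theorem stepRadius_sub_le_dist (hz : z ∈ stepSet r σ x a) : stepRadius r x a - σ ≤ dist z a := by
  linarith [hz.2, dist_triangle x z a]

theorem level_of_mem_stepSet (hr : 0 < r) (hσr : σ < r) (hz : z ∈ stepSet r σ x a) :
    level r z a + 1 = level r x a := by
  obtain ⟨n, hx⟩ : ∃ n, level r x a = n + 1 := by
    refine Nat.exists_eq_add_one.2 (Nat.pos_of_ne_zero fun h => ?_)
    have := hz.1
    rw [stepRadius, h, Nat.cast_zero] at this
    linarith [dist_nonneg (x := z) (y := a)]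
  have hL := stepRadius_eq hx
  rw [hx, Nat.add_right_cancel_iff]
  refine le_antisymm ((level_le_iff hr).2 (hL ▸ hz.1)) ?_
  cases n with
  | zero => exact Nat.zero_le _
  | succ m =>
    refine (lt_level_iff hr).2 ?_
    have := stepRadius_sub_le_dist hz
    push_cast at hL ⊢
    nlinarith

theorem stepRadius_of_mem_stepSet (hr : 0 < r) (hσr : σ < r) (hz : z ∈ stepSet r σ x a) :
    stepRadius r z a = stepRadius r x a - r := by
  rw [stepRadius, stepRadius, ← level_of_mem_stepSet hr hσr hz]; push_cast; ring

theorem stepSet_subset_closedBall (hr : 0 < r) : stepSet r σ x a ⊆ closedBall x (r + σ) :=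
  fun z hz => by
    rw [mem_closedBall, dist_comm]
    linarith [hz.2, dist_le_stepRadius_add hr (x := x) (a := a)]

theorem stepSet_finite (hr : 0 < r) (hfin : ∀ (c : X) (ρ : ℝ), (closedBall c ρ).Finite) :
    (stepSet r σ x a).Finite :=
  (hfin x _).subset (stepSet_subset_closedBall hr)

theorem card_le_of_coe_eq_stepSet (hr : 0 < r) (hfin : ∀ (c : X) (ρ : ℝ), (closedBall c ρ).Finite)
    (hK : ∀ u : X, Nat.card (closedBall u (r + σ)) ≤ K) {S : Finset X}
    (hS : ↑S = stepSet r σ x a) : S.card ≤ K := by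
  rw [← Set.ncard_coe_finset, hS]
  exact (Set.ncard_le_ncard (stepSet_subset_closedBall hr) (hfin x _)).trans
    (Nat.card_coe_set_eq (closedBall x (r + σ)) ▸ hK x)

theorem stepSet_nonempty (hgeo : IsWeaklyGeodesic X δ₀) (hδ₀ : 0 ≤ δ₀) (hδ₀σ : δ₀ ≤ σ)
    (hr : 0 < r) (hx : 1 ≤ level r x a) : (stepSet r σ x a).Nonempty := by
  have h0 : 0 ≤ stepRadius r x a := by
    have : (1 : ℝ) ≤ level r x a := by exact_mod_cast hx
    rw [stepRadius]; exact mul_nonneg hr.le (by linarith)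
  obtain ⟨z, hz, hzx⟩ := hgeo a x (stepRadius r x a) h0
    (by rw [dist_comm]; linarith [stepRadius_lt_dist hr (x := x) (a := a)])
  exact ⟨z, by rwa [dist_comm], by linarith [dist_comm x z, dist_comm a x]⟩

theorem exists_mem_stepSet_inter (hX : IsHyperbolic X δ) (hδ : 0 ≤ δ)
    (hgeo : IsWeaklyGeodesic X δ₀) (hδ₀ : 0 ≤ δ₀) (hσ : δ₀ + δ ≤ σ) (hr : 0 < r)
    (hlev : level r x a = level r x' a) (hx : 1 ≤ level r x a)
    (hxx' : pairExcess r x x' a ≤ σ - δ) : ∃ w, w ∈ stepSet r σ x a ∧ w ∈ stepSet r σ x' a := by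
  have hR : stepRadius r x' a = stepRadius r x a := by rw [stepRadius, stepRadius, hlev]
  have h0 : 0 ≤ stepRadius r x a := by
    have : (1 : ℝ) ≤ level r x a := by exact_mod_cast hx
    rw [stepRadius]; exact mul_nonneg hr.le (by linarith)
  obtain ⟨w, hwa, hxw, hx'w⟩ := hX.exists_common_descend hgeo (u := x) (u' := x') (a := a) h0
    (by linarith [stepRadius_lt_dist hr (x := x) (a := a)])
  rw [pairExcess, hR] at hxx'
  refine ⟨w, ⟨hwa, by linarith⟩, ⟨hR ▸ hwa, ?_⟩⟩
  have := max_le (show δ₀ ≤ σ - δ by linarith) hxx'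
  rw [hR]
  linarith

theorem pairExcess_le_of_mem_stepSet (hX : IsHyperbolic X δ) (hδ : 0 ≤ δ) (hr : 0 < r)
    (hσr : σ < r) (hlev : level r x a = level r x' a) (hz : z ∈ stepSet r σ x a)
    (hz' : z' ∈ stepSet r σ x' a) :
    pairExcess r z z' a ≤ max (σ + 3 * δ / 2) (pairExcess r x x' a + 3 * δ) - 2 * (r - σ) := by
  have hR : stepRadius r x' a = stepRadius r x a := by rw [stepRadius, stepRadius, hlev]
  have hzz' := hX.dist_le_of_descend hδ hz.1 hz.2 (hR ▸ hz'.1) (hR ▸ hz'.2)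
  have := stepRadius_sub_le_dist hz
  have := stepRadius_sub_le_dist hz'
  rw [pairExcess, stepRadius_of_mem_stepSet hr hσr hz, stepRadius_of_mem_stepSet hr hσr hz', hR,
    pairExcess, hR]
  linarith

open Classical in
theorem descentMeasure_of_level_le_two (h : level r x a ≤ 2) (y : X) :
    μ x a y = if y = x then 1 else 0 := by
  unfold descentMeasure
  generalize level r x a = n at h
  interval_cases n <;> rfl

section Recursion

variable (hr : 0 < r) (hσr : σ < r)
include hr hσr

theorem descentMeasure_eq_finsum (h : 3 ≤ level r x a) (y : X) :
    μ x a y = (Nat.card (stepSet r σ x a) : ℝ)⁻¹ * ∑ᶠ z ∈ stepSet r σ x a, μ z a y := by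
  obtain ⟨n, hn⟩ := Nat.exists_eq_add_of_le' h
  simp only [descentMeasure, hn, descentAux]
  congr 1
  refine finsum_mem_congr rfl fun z hz => ?_
  have := level_of_mem_stepSet hr hσr hz
  rw [show level r z a = n + 2 by omega]

theorem descentMeasure_eq_sum (h : 3 ≤ level r x a) {S : Finset X} (hS : ↑S = stepSet r σ x a)
    (y : X) : μ x a y = (S.card : ℝ)⁻¹ * ∑ z ∈ S, μ z a y := by
  rw [descentMeasure_eq_finsum hr hσr h, ← hS, Nat.card_coe_set_eq, Set.ncard_coe_finset,
    finsum_mem_coe_finset]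

theorem descent_induction (a : X) {P : X → Prop} (base : ∀ x, level r x a ≤ 2 → P x)
    (step : ∀ x, 3 ≤ level r x a → (∀ z ∈ stepSet r σ x a, P z) → P x) (x : X) : P x := by
  suffices ∀ n x, level r x a = n → P x from this _ x rfl
  intro n
  induction n with
  | zero => exact fun x hx => base x (by omega)
  | succ n ih =>
    intro x hx
    by_cases h : n + 1 ≤ 2
    · exact base x (by omega)
    · exact step x (by omega) fun z hz => ih z (by have := level_of_mem_stepSet hr hσr hz; omega)

theorem descentMeasure_nonneg (x a y : X) : 0 ≤ μ x a y := by
  induction x using descent_induction hr hσr a with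
  | base x hx => rw [descentMeasure_of_level_le_two hx]; split_ifs <;> norm_num
  | step x hx ih =>
    rw [descentMeasure_eq_finsum hr hσr hx]
    exact mul_nonneg (by positivity) (finsum_nonneg fun z => finsum_nonneg fun hz => ih z hz)

theorem dist_le_of_descentMeasure_ne_zero (hy : μ x a y ≠ 0) : dist y a ≤ 2 * r := by
  induction x using descent_induction hr hσr a with
  | base x hx =>
    rw [descentMeasure_of_level_le_two hx] at hy
    obtain rfl : y = x := by by_contra h; simp [h] at hy
    exact (level_le_two_iff hr).1 hx
  | step x hx ih =>
    rw [descentMeasure_eq_finsum hr hσr hx] at hy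
    obtain ⟨z, hz, hzy⟩ := exists_ne_zero_of_finsum_mem_ne_zero (right_ne_zero_of_mul hy)
    exact ih z hz hzy

theorem descentMeasure_eq_zero (hy : 2 * r < dist y a) : μ x a y = 0 :=
  not_not.1 fun h => (dist_le_of_descentMeasure_ne_zero hr hσr h).not_gt hy

theorem support_descentMeasure_subset : Function.support (μ x a) ⊆ closedBall a (2 * r) :=
  fun _ hy => mem_closedBall.2 (dist_le_of_descentMeasure_ne_zero hr hσr hy)

section Mass

variable (hgeo : IsWeaklyGeodesic X δ₀) (hδ₀ : 0 ≤ δ₀) (hδ₀σ : δ₀ ≤ σ)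
  (hfin : ∀ (c : X) (ρ : ℝ), (closedBall c ρ).Finite)
include hgeo hδ₀ hδ₀σ hfin

theorem sum_descentMeasure {Y : Finset X} (hY : closedBall a (2 * r) ⊆ Y) (x : X) :
    ∑ y ∈ Y, μ x a y = 1 := by
  induction x using descent_induction hr hσr a with
  | base x hx =>
    have hxY : x ∈ Y := hY (by rw [mem_closedBall]; exact (level_le_two_iff hr).1 hx)
    simp_rw [descentMeasure_of_level_le_two hx]
    rw [Finset.sum_eq_single_of_mem x hxY fun y _ hyx => if_neg hyx, if_pos rfl]
  | step x hx ih =>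
    obtain ⟨S, hS⟩ := (stepSet_finite (σ := σ) (x := x) (a := a) hr hfin).exists_finset_coe
    have hSne : S.Nonempty := by
      rw [← Finset.coe_nonempty, hS]; exact stepSet_nonempty hgeo hδ₀ hδ₀σ hr (by omega)
    simp_rw [descentMeasure_eq_sum hr hσr hx hS, ← Finset.mul_sum]
    rw [Finset.sum_comm, Finset.sum_congr rfl fun z hz => ih z (hS ▸ hz)]
    simp [hSne.card_pos.ne']

theorem finsum_descentMeasure (x a : X) : ∑ᶠ y, μ x a y = 1 := by
  rw [finsum_eq_sum_of_support_subset _ (s := (hfin a (2 * r)).toFinset)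
    (by simpa using support_descentMeasure_subset hr hσr)]
  exact sum_descentMeasure hr hσr hgeo hδ₀ hδ₀σ hfin (by simp) x

theorem sum_abs_descentMeasure_sub_le_two (Y : Finset X) (x x' a : X) :
    ∑ y ∈ Y, |μ x a y - μ x' a y| ≤ 2 := by
  classical
  have hle : ∀ u, ∑ y ∈ Y, μ u a y ≤ 1 := fun u =>
    (Finset.sum_le_sum_of_subset_of_nonneg Finset.subset_union_left
      fun y _ _ => descentMeasure_nonneg hr hσr u a y).trans_eq
      (sum_descentMeasure hr hσr hgeo hδ₀ hδ₀σ hfin (Y := Y ∪ (hfin a (2 * r)).toFinset)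
        (by simp) u)
  calc ∑ y ∈ Y, |μ x a y - μ x' a y| ≤ ∑ y ∈ Y, (μ x a y + μ x' a y) :=
        Finset.sum_le_sum fun y _ => (abs_sub _ _).trans_eq (by
          rw [abs_of_nonneg (descentMeasure_nonneg hr hσr _ _ _),
            abs_of_nonneg (descentMeasure_nonneg hr hσr _ _ _)])
    _ ≤ 2 := by rw [Finset.sum_add_distrib]; linarith [hle x, hle x']

theorem sum_abs_descentMeasure_sub_of_disjoint (h : ∀ y, μ x a y = 0 ∨ μ x' a y = 0) :
    ∑ y ∈ (hfin a (2 * r)).toFinset, |μ x a y - μ x' a y| = 2 := by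
  have hsum := sum_descentMeasure hr hσr hgeo hδ₀ hδ₀σ hfin (a := a)
    (Y := (hfin a (2 * r)).toFinset) (by simp)
  rw [Finset.sum_congr rfl fun y _ => show |μ x a y - μ x' a y| = μ x a y + μ x' a y by
    rcases h y with h | h <;> simp [h, abs_of_nonneg (descentMeasure_nonneg hr hσr _ _ _)],
    Finset.sum_add_distrib, hsum, hsum]
  norm_num

end Mass

end Recursion

section Equivariance

variable {G : Type*} [Group G] [MulAction G X] [IsIsometricSMul G X] (g : G)

theorem level_smul : level r (g • x) (g • a) = level r x a := by
  rw [level, level, dist_smul]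

theorem stepSet_smul : stepSet r σ (g • x) (g • a) = (g • ·) '' stepSet r σ x a := by
  ext z
  obtain ⟨z, rfl⟩ : ∃ w, g • w = z := ⟨g⁻¹ • z, smul_inv_smul g z⟩
  simp [stepSet, stepRadius, level_smul, dist_smul]

theorem descentMeasure_smul (x a y : X) : μ (g • x) (g • a) (g • y) = μ x a y := by
  rw [descentMeasure, descentMeasure, level_smul]
  generalize level r x a = n
  induction n using Nat.strong_induction_on generalizing x y with
  | _ n ih =>
    match n with
    | n + 3 =>
      simp only [descentAux, stepSet_smul, Nat.card_image_of_injective (MulAction.injective g),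
        finsum_mem_image (MulAction.injective g).injOn]
      congr 1
      exact finsum_mem_congr rfl fun z _ => ih (n + 2) (by omega) z y
    | 0 | 1 | 2 => classical exact if_congr (MulAction.injective g).eq_iff rfl rfl

end Equivariance

section Excess

variable (hX : IsHyperbolic X δ) (hr₀ : 0 < r) (hσr : σ < r) (hδr : δ ≤ 2 * (r - σ))
include hX hr₀ hσr hδr

theorem excess_le_of_mem_stepSet_of_descentMeasure_ne_zero {w v : X} (hv : 3 ≤ level r v a)
    (hw : w ∈ stepSet r σ v a) (hxw : dist x w ≤ dist x a - dist w a + (σ + δ))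
    (hy : μ w a y ≠ 0) : 2 * r - σ ≤ dist y a ∧ dist x y ≤ dist x a - dist y a + (σ + δ) := by
  induction w using descent_induction hr₀ hσr a generalizing v with
  | base w hlev =>
    rw [descentMeasure_of_level_le_two hlev] at hy
    obtain rfl : y = w := by by_contra h; simp [h] at hy
    have : (3 : ℝ) ≤ level r v a := by exact_mod_cast hv
    have : 2 * r ≤ stepRadius r v a := by rw [stepRadius]; nlinarith
    exact ⟨by linarith [stepRadius_sub_le_dist hw], hxw⟩
  | step w hlev ih =>
    rw [descentMeasure_eq_finsum hr₀ hσr hlev] at hy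
    obtain ⟨z, hz, hzy⟩ := exists_ne_zero_of_finsum_mem_ne_zero (right_ne_zero_of_mul hy)
    refine ih z hz hlev hz ?_ hzy
    have := stepRadius_of_mem_stepSet hr₀ hσr hw
    have := stepRadius_sub_le_dist hw
    have := hz.1
    simpa using hX.excess_le_of_step hxw (c := σ) (by linarith [hz.2]) (by linarith)

theorem excess_le_of_descentMeasure_ne_zero (hδ : 0 ≤ δ) (hx : 3 ≤ level r x a)
    (hy : μ x a y ≠ 0) : 2 * r - σ ≤ dist y a ∧ dist x y ≤ dist x a - dist y a + (σ + δ) := by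
  rw [descentMeasure_eq_finsum hr₀ hσr hx] at hy
  obtain ⟨z, hz, hzy⟩ := exists_ne_zero_of_finsum_mem_ne_zero (right_ne_zero_of_mul hy)
  exact excess_le_of_mem_stepSet_of_descentMeasure_ne_zero hX hr₀ hσr hδr hx hz
    (by linarith [hz.1, hz.2]) hzy

theorem descentMeasure_eq_zero_or_eq_zero (hδ : 0 ≤ δ) (hr : δ₀ + 4 * σ + 2 * δ < 4 * r)
    (hx : 2 * r < dist x a) (hx' : 2 * r < dist x' a)
    (hxx' : dist x a + dist a x' ≤ dist x x' + δ₀) (y : X) : μ x a y = 0 ∨ μ x' a y = 0 := by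
  by_contra! h
  have h₁ := excess_le_of_descentMeasure_ne_zero hX hr₀ hσr hδr hδ
    ((lt_level_iff hr₀).2 (by push_cast; linarith)) h.1
  have h₂ := excess_le_of_descentMeasure_ne_zero hX hr₀ hσr hδr hδ
    ((lt_level_iff hr₀).2 (by push_cast; linarith)) h.2
  linarith [dist_triangle x y x', dist_comm y x', dist_comm a x']

end Excess

section Decay

variable (hX : IsHyperbolic X δ) (hδ : 0 ≤ δ) (hgeo : IsWeaklyGeodesic X δ₀) (hδ₀ : 0 ≤ δ₀)
  (hfin : ∀ (c : X) (ρ : ℝ), (closedBall c ρ).Finite) (hσ : δ₀ + δ ≤ σ)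
  (hr : δ₀ + 1 + 3 * σ + 4 * δ ≤ r) (hK : ∀ u : X, Nat.card (closedBall u (r + σ)) ≤ K)
  (Y : Finset X)
include hX hδ hgeo hδ₀ hfin hσ hr hK

theorem sum_abs_sub_le_of_pairExcess_le (j : ℕ) (hlev : level r x a = level r x' a)
    (hj : j + 2 ≤ level r x a) (hxx' : pairExcess r x x' a ≤ σ - δ) :
    ∑ y ∈ Y, |μ x a y - μ x' a y| ≤ 2 * (1 - ((K : ℝ) ^ 2)⁻¹) ^ j := by
  have hr₀ : 0 < r := by linarith
  have hσr : σ < r := by linarith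
  induction j generalizing x x' with
  | zero =>
    simpa using sum_abs_descentMeasure_sub_le_two hr₀ hσr hgeo hδ₀ (by linarith) hfin Y x x' a
  | succ j ih =>
    have h3 : 3 ≤ level r x a := by omega
    obtain ⟨w, hw, hw'⟩ := exists_mem_stepSet_inter hX hδ hgeo hδ₀ hσ hr₀ hlev (by omega) hxx'
    obtain ⟨S, hS⟩ := (stepSet_finite (σ := σ) (x := x) (a := a) hr₀ hfin).exists_finset_coe
    obtain ⟨S', hS'⟩ := (stepSet_finite (σ := σ) (x := x') (a := a) hr₀ hfin).exists_finset_coe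
    have hwS : w ∈ S := by rw [← Finset.mem_coe, hS]; exact hw
    have hwS' : w ∈ S' := by rw [← Finset.mem_coe, hS']; exact hw'
    have hpairs : ∀ z ∈ S, ∀ z' ∈ S', ∑ y ∈ Y, |μ z a y - μ z' a y| ≤
        2 * (1 - ((K : ℝ) ^ 2)⁻¹) ^ j := by
      intro z hz z' hz'
      rw [← Finset.mem_coe, hS] at hz
      rw [← Finset.mem_coe, hS'] at hz'
      have := level_of_mem_stepSet hr₀ hσr hz
      have := level_of_mem_stepSet hr₀ hσr hz'
      refine ih (by omega) (by omega) ?_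
      have := pairExcess_le_of_mem_stepSet hX hδ hr₀ hσr hlev hz hz'
      have := max_le (show σ + 3 * δ / 2 ≤ σ + 2 * δ by linarith)
        (show pairExcess r x x' a + 3 * δ ≤ σ + 2 * δ by linarith)
      linarith
    simp_rw [descentMeasure_eq_sum hr₀ hσr h3 hS, descentMeasure_eq_sum hr₀ hσr (hlev ▸ h3) hS']
    refine (sum_abs_avg_sub_avg_le_of_mem_inter Y (fun z y => μ z a y) ⟨w, hwS⟩ ⟨w, hwS'⟩
      hwS hwS' hpairs).trans ?_
    have hβ := one_sub_inv_mul_le_one_sub_inv_sq (Finset.card_pos.2 ⟨w, hwS⟩)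
      (Finset.card_pos.2 ⟨w, hwS'⟩) (card_le_of_coe_eq_stepSet hr₀ hfin hK hS)
      (card_le_of_coe_eq_stepSet hr₀ hfin hK hS')
    have := one_sub_inv_sq_nonneg K
    calc (1 - ((S.card : ℝ) * S'.card)⁻¹) * (2 * (1 - ((K : ℝ) ^ 2)⁻¹) ^ j)
        ≤ (1 - ((K : ℝ) ^ 2)⁻¹) * (2 * (1 - ((K : ℝ) ^ 2)⁻¹) ^ j) := by gcongr
      _ = 2 * (1 - ((K : ℝ) ^ 2)⁻¹) ^ (j + 1) := by ring

theorem sum_abs_sub_le_of_level_eq (j : ℕ) (hlev : level r x a = level r x' a)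
    (hj : j + 3 ≤ level r x a) (hxx' : pairExcess r x x' a ≤ δ₀ + 1 + 2 * σ) :
    ∑ y ∈ Y, |μ x a y - μ x' a y| ≤ 2 * (1 - ((K : ℝ) ^ 2)⁻¹) ^ j := by
  have hr₀ : 0 < r := by linarith
  have hσr : σ < r := by linarith
  have h3 : 3 ≤ level r x a := by omega
  obtain ⟨S, hS⟩ := (stepSet_finite (σ := σ) (x := x) (a := a) hr₀ hfin).exists_finset_coe
  obtain ⟨S', hS'⟩ := (stepSet_finite (σ := σ) (x := x') (a := a) hr₀ hfin).exists_finset_coe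
  have hSne : S.Nonempty := by
    rw [← Finset.coe_nonempty, hS]; exact stepSet_nonempty hgeo hδ₀ (by linarith) hr₀ (by omega)
  have hS'ne : S'.Nonempty := by
    rw [← Finset.coe_nonempty, hS']; exact stepSet_nonempty hgeo hδ₀ (by linarith) hr₀ (by omega)
  simp_rw [descentMeasure_eq_sum hr₀ hσr h3 hS, descentMeasure_eq_sum hr₀ hσr (hlev ▸ h3) hS']
  refine sum_abs_avg_sub_avg_le_of_forall Y (fun z y => μ z a y) hSne hS'ne fun z hz z' hz' => ?_
  rw [← Finset.mem_coe, hS] at hz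
  rw [← Finset.mem_coe, hS'] at hz'
  have := level_of_mem_stepSet hr₀ hσr hz
  have := level_of_mem_stepSet hr₀ hσr hz'
  refine sum_abs_sub_le_of_pairExcess_le hX hδ hgeo hδ₀ hfin hσ hr hK Y j (by omega) (by omega) ?_
  have := pairExcess_le_of_mem_stepSet hX hδ hr₀ hσr hlev hz hz'
  have := max_le (show σ + 3 * δ / 2 ≤ δ₀ + 1 + 2 * σ + 3 * δ by linarith)
    (show pairExcess r x x' a + 3 * δ ≤ δ₀ + 1 + 2 * σ + 3 * δ by linarith)
  linarith

theorem sum_abs_sub_le_of_dist_le (j : ℕ) (hxx' : dist x x' ≤ δ₀ + 1) (hx : j + 3 ≤ level r x a)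
    (hx' : j + 3 ≤ level r x' a) :
    ∑ y ∈ Y, |μ x a y - μ x' a y| ≤ 2 * (1 - ((K : ℝ) ^ 2)⁻¹) ^ j := by
  have hr₀ : 0 < r := by linarith
  have hσr : σ < r := by linarith
  wlog hle : level r x a ≤ level r x' a generalizing x x'
  · simp_rw [abs_sub_comm (μ x a _)]
    exact this (by rwa [dist_comm]) hx' hx (by omega)
  have hle' : level r x' a ≤ level r x a + 1 := by
    have := (level_le_iff hr₀ (x := x) (a := a)).1 le_rfl
    refine (level_le_iff hr₀).2 ?_
    push_cast
    linarith [dist_triangle x' x a, dist_comm x x']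
  rcases (show level r x' a = level r x a ∨ level r x' a = level r x a + 1 by omega)
    with heq | hsucc
  · exact sum_abs_sub_le_of_level_eq hX hδ hgeo hδ₀ hfin hσ hr hK Y j heq.symm hx
      ((pairExcess_le_dist hr₀).trans (by linarith))
  -- one step down from `x'` reaches the level of `x`
  obtain ⟨S', hS'⟩ := (stepSet_finite (σ := σ) (x := x') (a := a) hr₀ hfin).exists_finset_coe
  have hS'ne : S'.Nonempty := by
    rw [← Finset.coe_nonempty, hS']; exact stepSet_nonempty hgeo hδ₀ (by linarith) hr₀ (by omega)
  have := sum_abs_avg_sub_avg_le_of_forall Y (fun z y => μ z a y) (Finset.singleton_nonempty x)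
    hS'ne (M := 2 * (1 - ((K : ℝ) ^ 2)⁻¹) ^ j) fun z hz z' hz' => by
      rw [Finset.mem_singleton.1 hz]
      rw [← Finset.mem_coe, hS'] at hz'
      have hlev := level_of_mem_stepSet hr₀ hσr hz'
      refine sum_abs_sub_le_of_level_eq hX hδ hgeo hδ₀ hfin hσ hr hK Y j (by omega) hx ?_
      have := stepRadius_of_mem_stepSet hr₀ hσr hz'
      have := stepRadius_sub_le_dist hz'
      have := stepRadius_lt_dist hr₀ (x := x) (a := a)
      have := dist_le_stepRadius_add hr₀ (x := x') (a := a)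
      have := dist_triangle x x' z'
      have := hz'.2
      rw [pairExcess]
      linarith
  simpa [descentMeasure_eq_sum hr₀ hσr (by omega) hS'] using this

theorem sum_abs_sub_le_of_dist_le_nat (j n : ℕ) (hxx' : dist x x' ≤ n)
    (hxa : r * (j + 2) + (δ₀ + 1) * n < dist x a) :
    ∑ y ∈ Y, |μ x a y - μ x' a y| ≤ 2 * (n + 1) * (1 - ((K : ℝ) ^ 2)⁻¹) ^ j := by
  have hr₀ : 0 < r := by linarith
  induction n generalizing x with
  | zero =>
    obtain rfl : x = x' := dist_le_zero.1 (by simpa using hxx')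
    simp only [sub_self, abs_zero, Finset.sum_const_zero]
    have := one_sub_inv_sq_nonneg K
    positivity
  | succ n ih =>
    have hn : (0 : ℝ) ≤ n := n.cast_nonneg
    set s := max 0 (dist x x' - n) + δ₀
    have hs : s ≤ dist x x' + δ₀ := by
      simp only [s]; gcongr; exact max_le dist_nonneg (by linarith)
    obtain ⟨w, hxw, hwx'⟩ := hgeo x x' s (by positivity) hs
    have hs₁ : s ≤ δ₀ + 1 := by
      simp only [s]; push_cast at hxx'
      linarith [max_le zero_le_one (show dist x x' - n ≤ 1 by linarith)]
    have hs₂ : dist x x' - n ≤ s - δ₀ := by simp only [s]; linarith [le_max_right 0 (dist x x' - n)]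
    have hwa : dist x a - (δ₀ + 1) ≤ dist w a := by linarith [dist_triangle x w a]
    push_cast at hxa
    have hlev : ∀ u, dist x a - (δ₀ + 1) ≤ dist u a → j + 3 ≤ level r u a := fun u hu =>
      (lt_level_iff hr₀).2 (by push_cast; nlinarith)
    calc ∑ y ∈ Y, |μ x a y - μ x' a y|
        ≤ ∑ y ∈ Y, |μ x a y - μ w a y| + ∑ y ∈ Y, |μ w a y - μ x' a y| := by
          rw [← Finset.sum_add_distrib]; exact Finset.sum_le_sum fun y _ => abs_sub_le _ _ _
      _ ≤ 2 * (1 - ((K : ℝ) ^ 2)⁻¹) ^ j + 2 * (n + 1) * (1 - ((K : ℝ) ^ 2)⁻¹) ^ j := by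
          gcongr
          · exact sum_abs_sub_le_of_dist_le hX hδ hgeo hδ₀ hfin hσ hr hK Y j (hxw.trans hs₁)
              (hlev x (by linarith)) (hlev w hwa)
          · exact ih (by linarith) (by linarith)
      _ = 2 * ((n + 1 : ℕ) + 1) * (1 - ((K : ℝ) ^ 2)⁻¹) ^ j := by push_cast; ring

variable (hK₁ : 1 ≤ K)
include hK₁

theorem exists_finsum_abs_sub_le_exp :
    ∃ ε > 0, ∀ k : ℕ, ∃ C > 0, ∀ x x' a : X, dist x x' ≤ k →
      ∑ᶠ y, |μ x a y - μ x' a y| ≤ C * Real.exp (-ε * dist x a) := by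
  have hr₀ : 0 < r := by linarith
  have hσr : σ < r := by linarith
  set β := 1 - ((K : ℝ) ^ 2)⁻¹
  refine ⟨(1 - β) / r, div_pos (by linarith [one_sub_inv_sq_lt_one hK₁]) hr₀, fun k => ?_⟩
  set b := 3 * r + (δ₀ + 1) * k
  refine ⟨2 * (k + 1) * Real.exp ((1 - β) / r * (b + r)), by positivity, fun x x' a hxx' => ?_⟩
  rw [finsum_eq_sum_of_support_subset _ (s := (hfin a (2 * r)).toFinset) fun y hy => ?_]
  · refine le_mul_exp_of_forall_le_pow (one_sub_inv_sq_nonneg K) (one_sub_inv_sq_lt_one hK₁).le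
      hr₀ (by positivity) ((sum_abs_descentMeasure_sub_le_two hr₀ hσr hgeo hδ₀ (by linarith) hfin
        _ x x' a).trans (by linarith [k.cast_nonneg (α := ℝ)])) fun j hj => ?_
    exact sum_abs_sub_le_of_dist_le_nat hX hδ hgeo hδ₀ hfin hσ hr hK _ j k hxx' (by linarith)
  · by_contra hyB
    simp only [Set.Finite.coe_toFinset, mem_closedBall, not_le] at hyB
    simp [descentMeasure_eq_zero hr₀ hσr hyB] at hy

theorem finite_setOf_disjoint (x x' : X) : {a | ∀ y, μ x a y = 0 ∨ μ x' a y = 0}.Finite := by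
  have hr₀ : 0 < r := by linarith
  have hσr : σ < r := by linarith
  set n := ⌈dist x x'⌉₊
  obtain ⟨j, hj⟩ := exists_pow_lt_of_lt_one (show (0 : ℝ) < 1 / (n + 1) by positivity)
    (one_sub_inv_sq_lt_one hK₁)
  refine (hfin x (r * (j + 2) + (δ₀ + 1) * n)).subset fun a ha => ?_
  by_contra hfar
  rw [mem_closedBall, not_le, dist_comm] at hfar
  have h := sum_abs_sub_le_of_dist_le_nat hX hδ hgeo hδ₀ hfin hσ hr hK (hfin a (2 * r)).toFinset
    j n (Nat.le_ceil _) hfar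
  rw [sum_abs_descentMeasure_sub_of_disjoint hr₀ hσr hgeo hδ₀ (by linarith) hfin ha] at h
  rw [lt_div_iff₀ (by positivity)] at hj
  nlinarith

theorem exists_le_card_setOf_disjoint :
    ∃ η > 0, ∃ N : ℕ, ∀ x x' : X, (N : ℝ) ≤ dist x x' →
      {a | ∀ y, μ x a y = 0 ∨ μ x' a y = 0}.Finite ∧
      η * dist x x' ≤ (Nat.card {a | ∀ y, μ x a y = 0 ∨ μ x' a y = 0} : ℝ) := by
  have hr₀ : 0 < r := by linarith
  refine ⟨1 / (2 * (δ₀ + 1)), by positivity, ⌈12 * r + 2 * δ₀ + 2⌉₊, fun x x' hN => ?_⟩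
  have hD := finite_setOf_disjoint hX hδ hgeo hδ₀ hfin hσ hr hK hK₁ x x'
  refine ⟨hD, ?_⟩
  have hT := (Nat.le_ceil _).trans hN
  set M := ⌊(dist x x' - 6 * r) / (δ₀ + 1)⌋₊
  have hM₁ : (δ₀ + 1) * M ≤ dist x x' - 6 * r :=
    (le_div_iff₀' (by positivity)).1 (Nat.floor_le (div_nonneg (by linarith) (by positivity)))
  have hM₂ : dist x x' - 6 * r < (δ₀ + 1) * (M + 1) :=
    (div_lt_iff₀' (by positivity)).1 (Nat.lt_floor_add_one _)
  have hcard := hgeo.le_card_of_forall_mem hδ₀ hD (lo := 3 * r) (M := M) (by positivity)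
    (by linarith) fun z hxz hzx' hz => descentMeasure_eq_zero_or_eq_zero hX hr₀ (by linarith)
      (by linarith) hδ (by linarith) (by linarith) (by rw [dist_comm]; linarith) hz
  rw [div_mul_eq_mul_div, one_mul, div_le_iff₀ (by positivity)]
  have : (M : ℝ) ≤ Nat.card {a | ∀ y, μ x a y = 0 ∨ μ x' a y = 0} := by exact_mod_cast hcard
  nlinarith

end Decay

end Descent

end

open Descent in
/-- Theorem 5.2 of Alvarez–Lafforgue. Let `(X, d)` be a δ-hyperbolic, weakly
δ₀-geodesic, uniformly locally finite metric space with an isometric action of a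
group `G`. Then there is a `G`-equivariant family of finitely supported probability
measures `μ x a` on `X` satisfying: (i) uniformly bounded supports, (ii) exponential
decay of `‖μ x a - μ x' a‖₁` in `d(x, a)` when `d(x, x') ≤ k`, (iii) linearly many
points `a` with disjoint supports when `d(x, x')` is large. -/
theorem exists_equivariant_measures_hyperbolic
    {X : Type*} [MetricSpace X] {G : Type*} [Group G] [MulAction G X]
    (δ : ℝ) (hδ : 0 ≤ δ)
    (hhyp : ∀ x₁ x₂ x₃ x₄ : X, dist x₁ x₄ + dist x₂ x₃ ≤
      max (dist x₁ x₂ + dist x₃ x₄) (dist x₁ x₃ + dist x₂ x₄) + δ)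
    (δ₀ : ℝ) (hδ₀ : 0 ≤ δ₀)
    (hwgeo : ∀ x y : X, ∀ s : ℝ, 0 ≤ s → s ≤ dist x y + δ₀ →
      ∃ z : X, dist x z ≤ s ∧ dist z y ≤ dist x y - s + δ₀)
    (hulf : ∀ r : ℝ, ∃ K : ℕ, ∀ x : X,
      (Metric.closedBall x r).Finite ∧ Nat.card (Metric.closedBall x r) ≤ K)
    (hiso : ∀ (g : G) (x y : X), dist (g • x) (g • y) = dist x y) :
    ∃ μ : X → X → X → ℝ,
      -- each `μ x a` is a finitely supported probability measure on `X`
      (∀ x a y, 0 ≤ μ x a y) ∧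
      (∀ x a, (Function.support (μ x a)).Finite) ∧
      (∀ x a, ∑ᶠ y, μ x a y = 1) ∧
      -- `G`-equivariance
      (∀ (g : G) (x a y : X), μ (g • x) (g • a) (g • y) = μ x a y) ∧
      -- (i) supports uniformly contained in balls `B(a, R)`
      (∃ R : ℕ, ∀ x a y : X, μ x a y ≠ 0 → dist a y ≤ (R : ℝ)) ∧
      -- (ii) exponential decay of `‖μ x a - μ x' a‖₁`
      (∃ ε : ℝ, 0 < ε ∧ ∀ k : ℕ, ∃ C : ℝ, 0 < C ∧
        ∀ x x' a : X, dist x x' ≤ (k : ℝ) →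
          ∑ᶠ y, |μ x a y - μ x' a y| ≤ C * Real.exp (-ε * dist x a)) ∧
      -- (iii) many points `a` with disjoint supports when `d(x,x')` is large
      (∃ η : ℝ, 0 < η ∧ ∃ N : ℕ, ∀ x x' : X, (N : ℝ) ≤ dist x x' →
        {a : X | ∀ y, μ x a y = 0 ∨ μ x' a y = 0}.Finite ∧
        η * dist x x' ≤ (Nat.card {a : X | ∀ y, μ x a y = 0 ∨ μ x' a y = 0} : ℝ)) := by
  set σ := δ₀ + δ
  set r := δ₀ + 1 + 3 * σ + 4 * δ
  have hr₀ : 0 < r := by positivity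
  have hσr : σ < r := by linarith
  have hfin : ∀ (c : X) (ρ : ℝ), (closedBall c ρ).Finite := fun c ρ => ((hulf ρ).choose_spec c).1
  obtain ⟨K, hK⟩ := hulf (r + σ)
  have hK' : ∀ u : X, Nat.card (closedBall u (r + σ)) ≤ K + 1 := fun u => (hK u).2.trans K.le_succ
  have : IsIsometricSMul G X := ⟨fun g => Isometry.of_dist_eq (hiso g)⟩
  refine ⟨descentMeasure r σ, descentMeasure_nonneg hr₀ hσr,
    fun x a => (hfin a _).subset (support_descentMeasure_subset hr₀ hσr),
    finsum_descentMeasure hr₀ hσr hwgeo hδ₀ (by linarith) hfin, descentMeasure_smul,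
    ⟨⌈2 * r⌉₊, fun x a y hy => ?_⟩,
    exists_finsum_abs_sub_le_exp hhyp hδ hwgeo hδ₀ hfin le_rfl le_rfl hK' K.succ_pos,
    exists_le_card_setOf_disjoint hhyp hδ hwgeo hδ₀ hfin le_rfl le_rfl hK' K.succ_pos⟩
  rw [dist_comm]
  exact (dist_le_of_descentMeasure_ne_zero hr₀ hσr hy).trans (Nat.le_ceil _)
end

section
/- Let n ≥ 1 be an integer, let p be a real number with p > n, and let x, x' be two distinct points of n-dimensional Euclidean space ℝⁿ. Define v : ℝⁿ → ℝⁿ by v(a) = (x − a)/‖x − a‖ − (x' − a)/‖x' − a‖ for a ∉ {x, x'}, and v(a) = 0 for a ∈ {x, x'}. Then ∫_{ℝⁿ} ‖v(a)‖^p da < ∞ with respect to Lebesgue measure; that is, v belongs to L^p(ℝⁿ; ℝⁿ). -/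
/-!
Both unit fields have norm at most `1`, and far from `x` they almost agree: for `u = x - a`,
`w = x' - a` and `û = ‖u‖⁻¹ • u`, `ŵ = ‖w‖⁻¹ • w`, one has
`‖u‖ • (û - ŵ) = (u - w) + (‖w‖ - ‖u‖) • ŵ`, so `‖u‖ ‖û - ŵ‖ ≤ 2 ‖x - x'‖`. Hence
`‖v a‖ ≤ C (1 + ‖x - a‖)⁻¹` off the null set `{x, x'}`, and `(1 + ‖·‖)^(-p)` is integrable
on `ℝⁿ` for `p > n`.
-/

open MeasureTheory NormedSpace

section Normalize

variable {E : Type*} [NormedAddCommGroup E] [NormedSpace ℝ E]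

theorem norm_normalize_le_one (u : E) : ‖normalize u‖ ≤ 1 := by
  rcases eq_or_ne u 0 with rfl | hu
  · simp
  · exact (norm_normalize hu).le

theorem norm_normalize_sub_normalize_le_two (u w : E) : ‖normalize u - normalize w‖ ≤ 2 := by
  calc ‖normalize u - normalize w‖ ≤ ‖normalize u‖ + ‖normalize w‖ := norm_sub_le _ _
    _ ≤ 1 + 1 := add_le_add (norm_normalize_le_one u) (norm_normalize_le_one w)
    _ = 2 := one_add_one_eq_two

theorem norm_mul_norm_normalize_sub_normalize_le (u w : E) :
    ‖u‖ * ‖normalize u - normalize w‖ ≤ 2 * ‖u - w‖ := by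
  have hsplit : ‖u‖ • (normalize u - normalize w) = (u - w) + (‖w‖ - ‖u‖) • normalize w := by
    rw [smul_sub, norm_smul_normalize, sub_smul, norm_smul_normalize]
    abel
  calc ‖u‖ * ‖normalize u - normalize w‖ = ‖(u - w) + (‖w‖ - ‖u‖) • normalize w‖ := by
        rw [← hsplit, norm_smul, norm_norm]
    _ ≤ ‖u - w‖ + |‖w‖ - ‖u‖| * ‖normalize w‖ := by
        rw [← Real.norm_eq_abs, ← norm_smul]; exact norm_add_le _ _
    _ ≤ ‖u - w‖ + ‖u - w‖ * 1 := by
        gcongr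
        · rw [abs_sub_comm]; exact abs_norm_sub_norm_le u w
        · exact norm_normalize_le_one w
    _ = 2 * ‖u - w‖ := by ring

theorem norm_normalize_sub_normalize_le (u w : E) :
    ‖normalize u - normalize w‖ ≤ 2 * (1 + ‖u - w‖) * (1 + ‖u‖)⁻¹ := by
  rw [← div_eq_mul_inv, le_div_iff₀ (by positivity)]
  linarith [norm_normalize_sub_normalize_le_two u w, norm_mul_norm_normalize_sub_normalize_le u w]

end Normalize

section FiniteDimensional

variable {E : Type*} [NormedAddCommGroup E] [NormedSpace ℝ E] [FiniteDimensional ℝ E]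
  [MeasurableSpace E] [BorelSpace E] {μ : Measure E} [μ.IsAddHaarMeasure]

theorem memLp_inv_one_add_norm_sub {p : ℝ} (hp : (Module.finrank ℝ E : ℝ) < p) (x : E) :
    MemLp (fun a => (1 + ‖x - a‖)⁻¹) (ENNReal.ofReal p) μ := by
  have hp0 : 0 < p := (Nat.cast_nonneg _).trans_lt hp
  have hmeas : AEStronglyMeasurable (fun a : E => (1 + ‖x - a‖)⁻¹) μ := by fun_prop
  rw [← integrable_norm_rpow_iff hmeas (by simpa using hp0) ENNReal.ofReal_ne_top,
    ENNReal.toReal_ofReal hp0.le]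
  refine ((integrable_one_add_norm (μ := μ) hp).comp_sub_right x).congr
    (Filter.Eventually.of_forall fun a => ?_)
  have hpos : 0 < 1 + ‖x - a‖ := by positivity
  simp only [norm_sub_rev a x, norm_inv, Real.norm_of_nonneg hpos.le]
  rw [Real.inv_rpow hpos.le, Real.rpow_neg hpos.le]

theorem memLp_normalize_sub_sub_normalize_sub {p : ℝ} (hp : (Module.finrank ℝ E : ℝ) < p)
    (x x' : E) :
    MemLp (fun a => normalize (x - a) - normalize (x' - a)) (ENNReal.ofReal p) μ := by
  refine ((memLp_inv_one_add_norm_sub hp x).const_mul (2 * (1 + ‖x - x'‖))).of_le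
    (by unfold NormedSpace.normalize; fun_prop) (Filter.Eventually.of_forall fun a => ?_)
  have hbound := norm_normalize_sub_normalize_le (x - a) (x' - a)
  rw [sub_sub_sub_cancel_right] at hbound
  rw [Real.norm_of_nonneg (by positivity)]
  exact hbound

end FiniteDimensional

theorem MeasureTheory.MemLp.lintegral_ofReal_norm_rpow_lt_top {α F : Type*} [MeasurableSpace α]
    [NormedAddCommGroup F] {μ : Measure α} {f : α → F} {p : ℝ} (hp : 0 < p)
    (hf : MemLp f (ENNReal.ofReal p) μ) :
    ∫⁻ a, ENNReal.ofReal (‖f a‖ ^ p) ∂μ < ⊤ := by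
  have h := hf.integrable_norm_rpow (by simpa using hp) ENNReal.ofReal_ne_top
  rw [ENNReal.toReal_ofReal hp.le] at h
  exact h.lintegral_lt_top

theorem geodesic_field_difference_memLp_general
    (n : ℕ) (hn : 1 ≤ n) (p : ℝ) (hp : (n : ℝ) < p)
    (x x' : EuclideanSpace ℝ (Fin n))
    (v : EuclideanSpace ℝ (Fin n) → EuclideanSpace ℝ (Fin n))
    (hv : ∀ a, a ≠ x → a ≠ x' →
      v a = ‖x - a‖⁻¹ • (x - a) - ‖x' - a‖⁻¹ • (x' - a)) :
    (∫⁻ a, ENNReal.ofReal (‖v a‖ ^ p) ∂(volume : Measure (EuclideanSpace ℝ (Fin n)))) < ⊤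
      ∧ MemLp v (ENNReal.ofReal p)
        (volume : Measure (EuclideanSpace ℝ (Fin n))) := by
  have : NeZero n := ⟨by omega⟩
  have hv_ae : (fun a => normalize (x - a) - normalize (x' - a)) =ᵐ[volume] v := by
    filter_upwards [volume.ae_ne x, volume.ae_ne x'] with a hax hax'
    exact (hv a hax hax').symm
  have hmem : MemLp v (ENNReal.ofReal p) volume :=
    (memLp_normalize_sub_sub_normalize_sub (by simpa using hp) x x').ae_eq hv_ae
  exact ⟨hmem.lintegral_ofReal_norm_rpow_lt_top ((Nat.cast_nonneg n).trans_lt hp), hmem⟩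

/-- The Euclidean computation of Section 2 of Alvarez–Lafforgue: for `p > n` and two
distinct points `x, x'` of `ℝⁿ`, the difference of the unit geodesic fields pointing
toward `x` and toward `x'`, i.e. `v(a) = (x - a)/‖x - a‖ - (x' - a)/‖x' - a‖`,
belongs to `L^p(ℝⁿ; ℝⁿ)`. -/
theorem geodesic_field_difference_memLp
    (n : ℕ) (hn : 1 ≤ n) (p : ℝ) (hp : (n : ℝ) < p)
    (x x' : EuclideanSpace ℝ (Fin n)) (hxx' : x ≠ x')
    (v : EuclideanSpace ℝ (Fin n) → EuclideanSpace ℝ (Fin n))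
    (hv : ∀ a, a ≠ x → a ≠ x' →
      v a = ‖x - a‖⁻¹ • (x - a) - ‖x' - a‖⁻¹ • (x' - a))
    (hvx : v x = 0) (hvx' : v x' = 0) :
    (∫⁻ a, ENNReal.ofReal (‖v a‖ ^ p) ∂(volume : Measure (EuclideanSpace ℝ (Fin n)))) < ⊤
      ∧ MemLp v (ENNReal.ofReal p)
        (volume : Measure (EuclideanSpace ℝ (Fin n))) :=
  geodesic_field_difference_memLp_general n hn p hp x x' v hv
end

section
/- Let (X,d) be a δ-hyperbolic metric space (δ ≥ 0) and let a, x, x', y, y' be points of X with d(x,x') ≤ 1, d(a,y) = d(a,y'), y ∈ δ-geod(a,x) and y' ∈ δ-geod(a,x'). Then d(y,y') ≤ 2δ + 2. -/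
/-!
Moving the endpoint `x` to `x'` costs at most `2 d(x,x') ≤ 2` in the tolerance, so `y` lies in
`(δ+2)-geod(a,x')`. Now `y` and `y'` lie on approximate geodesics from `a` to the same point `x'`
at the same distance from `a`, and the four-point condition at `y, a, x', y'` bounds `d(y,y')` by
the larger tolerance plus `δ`.
-/

namespace Metric

variable {X : Type*} [PseudoMetricSpace X]

/-- The set `ε-geod(a,x)`. -/
def approxGeod (ε : ℝ) (a x : X) : Set X :=
  {y | dist a y + dist y x ≤ dist a x + ε}

theorem mem_approxGeod {ε : ℝ} {a x y : X} :
    y ∈ approxGeod ε a x ↔ dist a y + dist y x ≤ dist a x + ε :=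
  Iff.rfl

theorem approxGeod_subset_of_dist_le {ε r : ℝ} {a x x' : X} (h : dist x x' ≤ r) :
    approxGeod ε a x ⊆ approxGeod (ε + 2 * r) a x' := by
  intro y hy
  rw [mem_approxGeod] at hy ⊢
  have hx : dist a x ≤ dist a x' + dist x' x := dist_triangle a x' x
  have hyx' : dist y x' ≤ dist y x + dist x x' := dist_triangle y x x'
  rw [dist_comm x' x] at hx
  linarith

theorem dist_le_of_mem_approxGeod_of_dist_eq {δ ε ε' : ℝ}
    (hhyp : ∀ x₁ x₂ x₃ x₄ : X, dist x₁ x₄ + dist x₂ x₃ ≤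
      max (dist x₁ x₂ + dist x₃ x₄) (dist x₁ x₃ + dist x₂ x₄) + δ)
    {a x y y' : X} (hy : y ∈ approxGeod ε a x) (hy' : y' ∈ approxGeod ε' a x)
    (hsphere : dist a y = dist a y') :
    dist y y' ≤ max ε ε' + δ := by
  rw [mem_approxGeod] at hy hy'
  have hmax : max (dist y a + dist x y') (dist y x + dist a y') ≤ dist a x + max ε ε' := by
    rw [dist_comm y a, dist_comm x y', ← hsphere]
    exact max_le (by linarith [le_max_right ε ε']) (by linarith [le_max_left ε ε'])
  linarith [hhyp y a x y']

end Metric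

theorem dist_le_of_approx_geod_neighbors_general
    {X : Type*} [MetricSpace X] (δ : ℝ)
    (hhyp : ∀ x₁ x₂ x₃ x₄ : X, dist x₁ x₄ + dist x₂ x₃ ≤
      max (dist x₁ x₂ + dist x₃ x₄) (dist x₁ x₃ + dist x₂ x₄) + δ)
    (a x x' y y' : X)
    (hxx' : dist x x' ≤ 1)
    (hsphere : dist a y = dist a y')
    (hy : dist a y + dist y x ≤ dist a x + δ)
    (hy' : dist a y' + dist y' x' ≤ dist a x' + δ) :
    dist y y' ≤ 2 * δ + 2 := by
  have hy_moved : y ∈ Metric.approxGeod (δ + 2 * 1) a x' :=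
    Metric.approxGeod_subset_of_dist_le hxx' hy
  have hclose := Metric.dist_le_of_mem_approxGeod_of_dist_eq hhyp hy_moved hy' hsphere
  rw [max_eq_left (by linarith)] at hclose
  linarith

/-- From Lemma 4.5 of Alvarez–Lafforgue: in a δ-hyperbolic space, if `d(x,x') ≤ 1`,
`d(a,y) = d(a,y')`, `y ∈ δ-geod(a,x)` and `y' ∈ δ-geod(a,x')`, then `d(y,y') ≤ 2δ + 2`. -/
theorem dist_le_of_approx_geod_neighbors
    {X : Type*} [MetricSpace X] (δ : ℝ) (hδ : 0 ≤ δ)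
    (hhyp : ∀ x₁ x₂ x₃ x₄ : X, dist x₁ x₄ + dist x₂ x₃ ≤
      max (dist x₁ x₂ + dist x₃ x₄) (dist x₁ x₃ + dist x₂ x₄) + δ)
    (a x x' y y' : X)
    (hxx' : dist x x' ≤ 1)
    (hsphere : dist a y = dist a y')
    (hy : dist a y + dist y x ≤ dist a x + δ)
    (hy' : dist a y' + dist y' x' ≤ dist a x' + δ) :
    dist y y' ≤ 2 * δ + 2 :=
  dist_le_of_approx_geod_neighbors_general δ hhyp a x x' y y' hxx' hsphere hy hy'
end

section
/- Let (X,d) be a δ-hyperbolic metric space (δ ≥ 0) and let a, x, x', y, y' be points of X with d(x,a) = d(x',a), d(x,x') ≤ 4δ, d(a,y) = d(a,y'), y ∈ δ-geod(a,x), y' ∈ δ-geod(a,x'), and d(x',y') ≥ 5δ. Then d(y,y') ≤ 3δ. -/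
/-!
Write `R = d(a,x) = d(a,x')` and `r = d(a,y) = d(a,y')`. Since `y'` is a `δ`-almost geodesic point
of `[a,x']` at distance at least `5δ` from `x'`, the gap `R - r` is at least `4δ`. The four-point
condition for `y, a, x, x'` moves `y` from `x` to the nearby `x'` at a cost of `δ`, giving
`d(y,x') ≤ R - r + 2δ`. The four-point condition for `y, a, x', y'` then bounds `d(y,y')` by `3δ`.
-/

section

variable {X : Type*} [PseudoMetricSpace X]

/-- `X` is `δ`-hyperbolic in the sense of Gromov's four-point condition. -/
def FourPointCondition (X : Type*) [PseudoMetricSpace X] (δ : ℝ) : Prop :=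
  ∀ x₁ x₂ x₃ x₄ : X, dist x₁ x₄ + dist x₂ x₃ ≤
    max (dist x₁ x₂ + dist x₃ x₄) (dist x₁ x₃ + dist x₂ x₄) + δ

/-- `ε-geod(x,y)`. -/
def approxGeod (ε : ℝ) (x y : X) : Set X :=
  {z | dist x z + dist z y ≤ dist x y + ε}

namespace FourPointCondition

variable {δ : ℝ}

theorem nonneg (h : FourPointCondition X δ) (x : X) : 0 ≤ δ := by
  simpa using h x x x x

theorem le_or_le (h : FourPointCondition X δ) (x₁ x₂ x₃ x₄ : X) :
    dist x₁ x₄ + dist x₂ x₃ ≤ dist x₁ x₂ + dist x₃ x₄ + δ ∨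
      dist x₁ x₄ + dist x₂ x₃ ≤ dist x₁ x₃ + dist x₂ x₄ + δ := by
  simpa only [← max_add_add_right, le_max_iff] using h x₁ x₂ x₃ x₄

theorem dist_le_sub_add_of_mem_approxGeod (h : FourPointCondition X δ) {a x x' y : X}
    (hax : dist a x = dist a x') (hxx' : dist x x' ≤ 4 * δ) (hy : y ∈ approxGeod δ a x)
    (hgap : 2 * δ ≤ dist a x - dist a y) :
    dist y x' ≤ dist a x - dist a y + 2 * δ := by
  have hδ := h.nonneg a
  have hya := dist_comm y a
  simp only [approxGeod, Set.mem_ofPred_eq] at hy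
  rcases h.le_or_le y a x x' with hcase | hcase <;> linarith

theorem dist_le_three_mul_of_mem_approxGeod (h : FourPointCondition X δ) {a x' y y' : X}
    (hsphere : dist a y = dist a y') (hy' : y' ∈ approxGeod δ a x')
    (hyx' : dist y x' ≤ dist a x' - dist a y' + 2 * δ) :
    dist y y' ≤ 3 * δ := by
  have hδ := h.nonneg a
  have hya := dist_comm y a
  have hx'y' := dist_comm x' y'
  simp only [approxGeod, Set.mem_ofPred_eq] at hy'
  rcases h.le_or_le y a x' y' with hcase | hcase <;> linarith

end FourPointCondition

end

theorem dist_le_three_delta_of_approx_geod_general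
    {X : Type*} [MetricSpace X] (δ : ℝ)
    (hhyp : ∀ x₁ x₂ x₃ x₄ : X, dist x₁ x₄ + dist x₂ x₃ ≤
      max (dist x₁ x₂ + dist x₃ x₄) (dist x₁ x₃ + dist x₂ x₄) + δ)
    (a x x' y y' : X)
    (hxa : dist x a = dist x' a)
    (hxx' : dist x x' ≤ 4 * δ)
    (hsphere : dist a y = dist a y')
    (hy : dist a y + dist y x ≤ dist a x + δ)
    (hy' : dist a y' + dist y' x' ≤ dist a x' + δ)
    (hx'y' : 5 * δ ≤ dist x' y') :
    dist y y' ≤ 3 * δ := by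
  have hyp : FourPointCondition X δ := hhyp
  have hax : dist a x = dist a x' := by rw [dist_comm a x, dist_comm a x', hxa]
  have hgap : 4 * δ ≤ dist a x - dist a y := by linarith [dist_comm x' y']
  have hyx' := hyp.dist_le_sub_add_of_mem_approxGeod hax hxx' hy (by linarith [hyp.nonneg a])
  rw [hax, hsphere] at hyx'
  exact hyp.dist_le_three_mul_of_mem_approxGeod hsphere hy' hyx'

/-- From Lemma 4.6 of Alvarez–Lafforgue: in a δ-hyperbolic space, if `d(x,a) = d(x',a)`,
`d(x,x') ≤ 4δ`, `d(a,y) = d(a,y')`, `y ∈ δ-geod(a,x)`, `y' ∈ δ-geod(a,x')` and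
`d(x',y') ≥ 5δ`, then `d(y,y') ≤ 3δ`. -/
theorem dist_le_three_delta_of_approx_geod
    {X : Type*} [MetricSpace X] (δ : ℝ) (hδ : 0 ≤ δ)
    (hhyp : ∀ x₁ x₂ x₃ x₄ : X, dist x₁ x₄ + dist x₂ x₃ ≤
      max (dist x₁ x₂ + dist x₃ x₄) (dist x₁ x₃ + dist x₂ x₄) + δ)
    (a x x' y y' : X)
    (hxa : dist x a = dist x' a)
    (hxx' : dist x x' ≤ 4 * δ)
    (hsphere : dist a y = dist a y')
    (hy : dist a y + dist y x ≤ dist a x + δ)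
    (hy' : dist a y' + dist y' x' ≤ dist a x' + δ)
    (hx'y' : 5 * δ ≤ dist x' y') :
    dist y y' ≤ 3 * δ :=
  dist_le_three_delta_of_approx_geod_general δ hhyp a x x' y y' hxa hxx' hsphere hy hy' hx'y'
end

section
/- Let (X,d) be a δ-hyperbolic metric space (δ ≥ 0) and let a, x, x', y' be points of X with d(x,a) = d(x',a), d(x,x') ≤ 4δ, y' ∈ geod(a,x') (i.e., d(a,y') + d(y',x') = d(a,x')), and d(x',y') ≥ 4δ. Then y' ∈ δ-geod(a,x). -/
theorem mem_approx_geod_of_geod_general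
    {X : Type*} [MetricSpace X] (δ : ℝ)
    (hhyp : ∀ x₁ x₂ x₃ x₄ : X, dist x₁ x₄ + dist x₂ x₃ ≤
      max (dist x₁ x₂ + dist x₃ x₄) (dist x₁ x₃ + dist x₂ x₄) + δ)
    (a x x' y' : X)
    (hxa : dist x a = dist x' a)
    (hxx' : dist x x' ≤ 4 * δ)
    (hy' : dist a y' + dist y' x' = dist a x')
    (hx'y' : 4 * δ ≤ dist x' y') :
    dist a y' + dist y' x ≤ dist a x + δ := by
  -- The four-point condition at `(x, a, x', y')`, with `d(a,x') = d(a,y') + d(y',x')`: if the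
  -- first sum realises the maximum this is the claim, otherwise it gives `d(y',x) ≤ δ`.
  have hfour := hhyp x a x' y'
  rw [dist_comm x y', dist_comm x a, dist_comm x' y'] at hfour
  rw [dist_comm x' y'] at hx'y'
  rw [dist_comm x a, dist_comm x' a] at hxa
  rcases le_total (dist x x' + dist a y') (dist a x + dist y' x') with hmax | hmax
  · rw [max_eq_left hmax] at hfour
    linarith
  · rw [max_eq_right hmax] at hfour
    have hy'x : dist y' x ≤ δ := by linarith
    have hay' : dist a y' ≤ dist a x := by linarith [dist_nonneg (x := y') (y := x')]
    linarith

/-- From Lemma 4.6 of Alvarez–Lafforgue: in a δ-hyperbolic space, if `d(x,a) = d(x',a)`,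
`d(x,x') ≤ 4δ`, `y' ∈ geod(a,x')` and `d(x',y') ≥ 4δ`, then `y' ∈ δ-geod(a,x)`. -/
theorem mem_approx_geod_of_geod
    {X : Type*} [MetricSpace X] (δ : ℝ) (hδ : 0 ≤ δ)
    (hhyp : ∀ x₁ x₂ x₃ x₄ : X, dist x₁ x₄ + dist x₂ x₃ ≤
      max (dist x₁ x₂ + dist x₃ x₄) (dist x₁ x₃ + dist x₂ x₄) + δ)
    (a x x' y' : X)
    (hxa : dist x a = dist x' a)
    (hxx' : dist x x' ≤ 4 * δ)
    (hy' : dist a y' + dist y' x' = dist a x')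
    (hx'y' : 4 * δ ≤ dist x' y') :
    dist a y' + dist y' x ≤ dist a x + δ :=
  mem_approx_geod_of_geod_general δ hhyp a x x' y' hxa hxx' hy' hx'y'
end
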